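/- arXiv:1308.1695 — 9 statements merged into one kernel-verified Lean document; each statement's English description precedes it below -/
import Mathlib

section
/- Let R be a commutative ℚ-algebra equipped with two derivations d₁, d₂ : R → R, let Γ ∈ R, and write D²x := d₂(d₂x) − Γ·d₂x. Let (F_g)_{g≥0} be a sequence in R and define U := d₂F₀, V := d₁F₁ − (1/2)·D²F₀, and W := d₁F₀ + (1/2)·(d₂F₀)². Then the master equation holds order by order in the string coupling for F = Σ_{g≥0} g_s^{2g−2} F_g — that is, for every g ≥ 0 one has d₁F_g + U·d₂F_g − (1/2)·D²F_{g−1} − (1/2)·Σ_{h=0}^{g} (d₂F_h)·(d₂F_{g−h}) = W·[g=0] + V·[g=1], with the convention F_{−1} := 0 and where [P] is 1 if P holds and 0 otherwise — if and only if the holomorphic anomaly equations hold: for every g ≥ 2, d₁F_g = (1/2)·( D²F_{g−1} + Σ_{h=1}^{g−1} (d₂F_{g−h})·(d₂F_h) ). -/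
/-!
At genus `g ≥ 2` both boundary terms `h = 0` and `h = g` of the quadratic sum in the master
equation equal `d₂F₀ · d₂F_g`, so half of their sum cancels the `U · d₂F_g` term and what is
left is exactly the holomorphic anomaly equation. At genus `0` and `1` the master equation holds
identically, by the choice of `W` and `V`.
-/

theorem sum_range_mul_sub_eq_add_sum_Icc {R : Type*} [Semiring R] (a : ℕ → R) {g : ℕ}
    (hg : 0 < g) :
    ∑ h ∈ Finset.range (g + 1), a h * a (g - h)
      = a 0 * a g + a g * a 0 + ∑ h ∈ Finset.Icc 1 (g - 1), a (g - h) * a h := by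
  obtain ⟨n, rfl⟩ := Nat.exists_eq_add_of_lt hg
  rw [Finset.sum_range_succ, Finset.sum_range_succ', ← Finset.sum_range_reflect,
    ← Finset.Ico_add_one_right_eq_Icc, Finset.sum_Ico_eq_sum_range, Nat.sub_zero, Nat.sub_self,
    add_assoc, add_comm]
  congr 1
  refine Finset.sum_congr rfl fun j hj => ?_
  rw [Finset.mem_range] at hj
  congr 2 <;> omega

namespace HolomorphicAnomaly

variable {R : Type*} [CommRing R] [Algebra ℚ R]

def covDerivTwo (d₂ : Derivation ℚ R R) (Γ x : R) : R :=
  d₂ (d₂ x) - Γ * d₂ x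

/-- The coefficient of `g_s^{2g−2}` in the master equation, with `F_{−1} = 0`. -/
def MasterEquationAt (d₁ d₂ : Derivation ℚ R R) (Γ : R) (F : ℕ → R) (g : ℕ) : Prop :=
  d₁ (F g) + d₂ (F 0) * d₂ (F g)
      - (2 : ℚ)⁻¹ • covDerivTwo d₂ Γ (if g = 0 then 0 else F (g - 1))
      - (2 : ℚ)⁻¹ • ∑ h ∈ Finset.range (g + 1), d₂ (F h) * d₂ (F (g - h))
    = (if g = 0 then d₁ (F 0) + (2 : ℚ)⁻¹ • (d₂ (F 0) * d₂ (F 0)) else 0)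
      + (if g = 1 then d₁ (F 1) - (2 : ℚ)⁻¹ • covDerivTwo d₂ Γ (F 0) else 0)

def HolomorphicAnomalyAt (d₁ d₂ : Derivation ℚ R R) (Γ : R) (F : ℕ → R) (g : ℕ) : Prop :=
  d₁ (F g) = (2 : ℚ)⁻¹ • (covDerivTwo d₂ Γ (F (g - 1))
    + ∑ h ∈ Finset.Icc 1 (g - 1), d₂ (F (g - h)) * d₂ (F h))

variable (d₁ d₂ : Derivation ℚ R R) (Γ : R) (F : ℕ → R)

theorem masterEquationAt_zero : MasterEquationAt d₁ d₂ Γ F 0 := by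
  simp only [MasterEquationAt, covDerivTwo, if_pos, if_neg zero_ne_one, map_zero, mul_zero,
    sub_zero, add_zero, zero_add, Finset.sum_range_one, Nat.sub_zero]
  module

theorem masterEquationAt_one : MasterEquationAt d₁ d₂ Γ F 1 := by
  rw [MasterEquationAt, if_neg one_ne_zero, if_pos rfl, if_neg one_ne_zero, Nat.sub_self,
    sum_range_mul_sub_eq_add_sum_Icc (fun h => d₂ (F h)) zero_lt_one, Nat.sub_self,
    Finset.Icc_eq_empty_of_lt zero_lt_one, Finset.sum_empty, mul_comm (d₂ (F 1))]
  module

theorem masterEquationAt_iff_holomorphicAnomalyAt {g : ℕ} (hg : 2 ≤ g) :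
    MasterEquationAt d₁ d₂ Γ F g ↔ HolomorphicAnomalyAt d₁ d₂ Γ F g := by
  rw [MasterEquationAt, HolomorphicAnomalyAt, if_neg (by omega), if_neg (by omega),
    if_neg (by omega), add_zero,
    sum_range_mul_sub_eq_add_sum_Icc (fun h => d₂ (F h)) (by omega : 0 < g),
    mul_comm (d₂ (F g))]
  constructor <;> intro h <;> linear_combination (norm := module) h

end HolomorphicAnomaly

/-- The master equation for the full free energy `F = Σ_g g_s^{2g−2} F_g`, with
`U := d₂F₀`, `V := d₁F₁ − (1/2)D²F₀` and `W := d₁F₀ + (1/2)(d₂F₀)²`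
(where `D²x := d₂(d₂x) − Γ·d₂x`), holds order by order in the string coupling
if and only if the holomorphic anomaly equations hold for every genus `g ≥ 2`. -/
theorem master_equation_iff_holomorphic_anomaly
    {R : Type*} [CommRing R] [Algebra ℚ R]
    (d₁ d₂ : Derivation ℚ R R) (Γ : R) (F : ℕ → R) :
    (∀ g : ℕ,
        d₁ (F g) + d₂ (F 0) * d₂ (F g)
          - (2 : ℚ)⁻¹ • (d₂ (d₂ (if g = 0 then 0 else F (g - 1)))
              - Γ * d₂ (if g = 0 then 0 else F (g - 1)))
          - (2 : ℚ)⁻¹ • ∑ h ∈ Finset.range (g + 1), d₂ (F h) * d₂ (F (g - h))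
        = (if g = 0 then d₁ (F 0) + (2 : ℚ)⁻¹ • (d₂ (F 0) * d₂ (F 0)) else 0)
          + (if g = 1 then d₁ (F 1)
              - (2 : ℚ)⁻¹ • (d₂ (d₂ (F 0)) - Γ * d₂ (F 0)) else 0))
    ↔ (∀ g : ℕ, 2 ≤ g →
        d₁ (F g)
          = (2 : ℚ)⁻¹ • (d₂ (d₂ (F (g - 1))) - Γ * d₂ (F (g - 1))
              + ∑ h ∈ Finset.Icc 1 (g - 1), d₂ (F (g - h)) * d₂ (F h))) := by
  open HolomorphicAnomaly in
  constructor
  · intro master g hg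
    exact (masterEquationAt_iff_holomorphicAnomalyAt d₁ d₂ Γ F hg).1 (master g)
  · intro anomaly g
    match g with
    | 0 => exact masterEquationAt_zero d₁ d₂ Γ F
    | 1 => exact masterEquationAt_one d₁ d₂ Γ F
    | g + 2 =>
      exact (masterEquationAt_iff_holomorphicAnomalyAt d₁ d₂ Γ F le_add_self).2
        (anomaly (g + 2) le_add_self)
end

section
/- Let R be a commutative ℚ-algebra with a derivation δ : R → R, and fix C, f, f̃, α ∈ R. On the polynomial ring R[S], define D₁p := p^δ + (f − C·S²)·(dp/dS), where p^δ applies δ to each coefficient of p; define D₂p := D₁(D₁p) − (f̃ − C·S)·D₁p; and set q₁ := (1/2)·C·S + α. Suppose (F_g)_{g≥2} is a sequence in R[S] satisfying the holomorphic anomaly equations in propagator form: dF₂/dS = (1/2)·( D₁q₁ − (f̃ − C·S)·q₁ + q₁² ), and for every g ≥ 3: dF_g/dS = (1/2)·D₂F_{g−1} + q₁·D₁F_{g−1} + (1/2)·Σ_{h=2}^{g−2} (D₁F_{g−h})·(D₁F_h). Then for every g ≥ 2, the degree of F_g as a polynomial in S is at most 3g − 3. -/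
/-!
Each operation in the anomaly equations raises the degree in `S` by a fixed amount: `p ↦ p^δ`
does not raise it, `D₁` raises it by at most one (through the factor `f − C S²` in front of
`d/dS`), `D₂` by at most two, and `q₁` is linear. By strong induction on `g`, every term on the
right-hand side for `dF_g/dS` then has degree at most `3g − 4`. Over a `ℚ`-algebra `d/dS` lowers
the degree of every nonconstant polynomial by exactly one, which gives `3g − 3`.
-/

open Polynomial

/-- Coefficientwise application of a map `δ : R → R` to a polynomial (the operation
`p ↦ p^δ`). -/
noncomputable def coeffwise {R : Type*} [CommRing R] (δ : R → R) (p : Polynomial R) :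
    Polynomial R :=
  p.sum fun i a => Polynomial.C (δ a) * Polynomial.X ^ i

/-- The covariant derivative `D₁ p = p^δ + (f − C·S²)·dp/dS` on `R[S]`. -/
noncomputable def covD1 {R : Type*} [CommRing R] (δ : R → R) (c f : R)
    (p : Polynomial R) : Polynomial R :=
  coeffwise δ p + (Polynomial.C f - Polynomial.C c * Polynomial.X ^ 2) * derivative p

/-- The second covariant derivative `D₂ p = D₁(D₁ p) − (f̃ − C·S)·D₁ p` on `R[S]`. -/
noncomputable def covD2 {R : Type*} [CommRing R] (δ : R → R) (c f ft : R)
    (p : Polynomial R) : Polynomial R :=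
  covD1 δ c f (covD1 δ c f p) - (Polynomial.C ft - Polynomial.C c * Polynomial.X) * covD1 δ c f p

section DegreeBounds

variable {R : Type*} [CommRing R] (δ : R → R) (c f : R)

theorem natDegree_coeffwise_le (p : R[X]) : (coeffwise δ p).natDegree ≤ p.natDegree := by
  rw [coeffwise, Polynomial.sum]
  exact natDegree_sum_le_of_forall_le _ _ fun i hi =>
    (natDegree_C_mul_X_pow_le _ i).trans (le_natDegree_of_mem_supp i hi)

theorem natDegree_covD1_le (p : R[X]) : (covD1 δ c f p).natDegree ≤ p.natDegree + 1 := by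
  have hquad : (C f - C c * X ^ 2 : R[X]).natDegree ≤ 2 := by compute_degree
  have hder : (derivative p).natDegree ≤ p.natDegree - 1 := natDegree_derivative_le p
  refine natDegree_add_le_of_degree_le ((natDegree_coeffwise_le δ p).trans (Nat.le_succ _)) ?_
  rcases Nat.eq_zero_or_pos p.natDegree with hp | hp
  · simp [derivative_of_natDegree_zero hp]
  · exact (natDegree_mul_le_of_le hquad hder).trans (by omega)

theorem natDegree_covD2_le (ft : R) (p : R[X]) :
    (covD2 δ c f ft p).natDegree ≤ p.natDegree + 2 := by
  have hlin : (C ft - C c * X : R[X]).natDegree ≤ 1 := by compute_degree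
  have hD1 := natDegree_covD1_le δ c f p
  have hD1D1 := natDegree_covD1_le δ c f (covD1 δ c f p)
  exact (natDegree_sub_le_of_le hD1D1 (natDegree_mul_le_of_le hlin hD1)).trans (by omega)

theorem natDegree_smul_C_mul_X_add_C_le {S : Type*} [SMulZeroClass S R] (s : S) (a : R) :
    (s • (C c * X) + C a).natDegree ≤ 1 :=
  natDegree_add_le_of_degree_le
    ((natDegree_smul_le s _).trans ((natDegree_C_mul_le c X).trans natDegree_X_le))
    ((natDegree_C a).trans_le zero_le_one)

theorem natDegree_anomaly_genus_two_le (ft : R) {q : R[X]} (hq : q.natDegree ≤ 1) :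
    (covD1 δ c f q - (C ft - C c * X) * q + q ^ 2).natDegree ≤ 2 := by
  have hlin : (C ft - C c * X : R[X]).natDegree ≤ 1 := by compute_degree
  have hD1 := natDegree_covD1_le δ c f q
  exact natDegree_add_le_of_degree_le
    ((natDegree_sub_le_of_le hD1 (natDegree_mul_le_of_le hlin hq)).trans (by omega))
    (natDegree_pow_le_of_le 2 hq)

end DegreeBounds

/-- The perturbative free energies, as solutions of the holomorphic anomaly equations in
propagator form, are polynomials of degree at most `3g − 3` in the propagator. -/
theorem perturbative_free_energy_degree
    {R : Type*} [CommRing R] [Algebra ℚ R] (δ : Derivation ℚ R R) (c f ft al : R)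
    (F : ℕ → Polynomial R)
    (h2 : derivative (F 2)
      = (2 : ℚ)⁻¹ • (covD1 (⇑δ) c f ((2 : ℚ)⁻¹ • (Polynomial.C c * X) + Polynomial.C al)
          - (Polynomial.C ft - Polynomial.C c * X)
              * ((2 : ℚ)⁻¹ • (Polynomial.C c * X) + Polynomial.C al)
          + ((2 : ℚ)⁻¹ • (Polynomial.C c * X) + Polynomial.C al) ^ 2))
    (hg : ∀ g : ℕ, 3 ≤ g → derivative (F g)
      = (2 : ℚ)⁻¹ • covD2 (⇑δ) c f ft (F (g - 1))
        + ((2 : ℚ)⁻¹ • (Polynomial.C c * X) + Polynomial.C al) * covD1 (⇑δ) c f (F (g - 1))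
        + (2 : ℚ)⁻¹ • ∑ h ∈ Finset.Icc 2 (g - 2), covD1 (⇑δ) c f (F (g - h)) * covD1 (⇑δ) c f (F h)) :
    ∀ g : ℕ, 2 ≤ g → (F g).natDegree ≤ 3 * g - 3 := by
  have : IsAddTorsionFree R := .of_module_rat R
  have hq₁ := natDegree_smul_C_mul_X_add_C_le c (2 : ℚ)⁻¹ al
  intro g
  induction g using Nat.strong_induction_on with
  | _ g ih =>
    intro hg2
    suffices (derivative (F g)).natDegree ≤ 3 * g - 4 by
      rw [natDegree_derivative] at this; omega
    rcases hg2.eq_or_lt with rfl | hg3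
    · rw [h2]
      exact (natDegree_smul_le _ _).trans (natDegree_anomaly_genus_two_le δ c f ft hq₁)
    · have hprev := ih (g - 1) (by omega) (by omega)
      rw [hg g hg3]
      refine natDegree_add_le_of_degree_le (natDegree_add_le_of_degree_le ?_ ?_) ?_
      · exact (natDegree_smul_le _ _).trans ((natDegree_covD2_le δ c f ft _).trans (by omega))
      · exact (natDegree_mul_le_of_le hq₁ (natDegree_covD1_le δ c f _)).trans (by omega)
      · refine (natDegree_smul_le _ _).trans (natDegree_sum_le_of_forall_le _ _ fun h hh => ?_)
        obtain ⟨h_ge, h_le⟩ := Finset.mem_Icc.mp hh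
        have hF₁ := ih (g - h) (by omega) (by omega)
        have hF₂ := ih h (by omega) h_ge
        exact (natDegree_mul_le_of_le (natDegree_covD1_le δ c f _)
          (natDegree_covD1_le δ c f _)).trans (by omega)
end

section
/- In the transseries model described in the context, suppose the family (F^{(n)}_g)_{n≥1,g≥0} satisfies the nonperturbative holomorphic anomaly equations. Then for every g ≥ 0 the one-instanton free energy is an exponential times a polynomial of degree at most 3g: F^{(1)}_g = T·p for some p ∈ R[S] with deg_S p ≤ 3g. -/
open Polynomial

noncomputable section

/-- The ring `M = R[S,T]`: polynomials in the propagator `S` (inner variable) and the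
instanton exponential `T` (outer variable). -/
abbrev TS (R : Type*) [CommRing R] : Type _ := Polynomial (Polynomial R)

/-- The propagator `S = S^{zz}` inside `R[S,T]`. -/
def Sv {R : Type*} [CommRing R] : TS R := Polynomial.C Polynomial.X

/-- The instanton exponential `T = exp((1/2)(δA)²S)` inside `R[S,T]`. -/
def Tv {R : Type*} [CommRing R] : TS R := Polynomial.X

/-- The embedding `R → R[S,T]`. -/
def cc {R : Type*} [CommRing R] (r : R) : TS R := Polynomial.C (Polynomial.C r)

/-- The operators `𝒟^{(n)}_h` of the nonperturbative holomorphic anomaly equations: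
`𝒟^{(n)}_1 x = (n/2)(δ(δA) − (f̃ − CS)δA)x + n(δA)(𝔇x + q₁x)`,
`𝒟^{(n)}_2 x = −(1/2)D²x − q₁𝔇x`, and for `h ≥ 2`,
`𝒟^{(n)}_{2h−1} x = n(δA)p_h x`, `𝒟^{(n)}_{2h} x = −p_h 𝔇x`,
with `q₁ = (1/2)CS + α` and `D²x = 𝔇(𝔇x) − (f̃ − CS)𝔇x`. -/
def Dop {R : Type*} [CommRing R] [Algebra ℚ R] (δ : Derivation ℚ R R)
    (c ft al A : R) (p : ℕ → Polynomial R) (Dh : Derivation ℚ (TS R) (TS R))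
    (n h : ℕ) (x : TS R) : TS R :=
  if h = 1 then
    (2 : ℚ)⁻¹ • ((n : TS R) * (cc (δ (δ A)) - (cc ft - cc c * Sv) * cc (δ A)) * x)
      + (n : TS R) * cc (δ A) * (Dh x + ((2 : ℚ)⁻¹ • (cc c * Sv) + cc al) * x)
  else if h = 2 then
    -((2 : ℚ)⁻¹ • (Dh (Dh x) - (cc ft - cc c * Sv) * Dh x))
      - ((2 : ℚ)⁻¹ • (cc c * Sv) + cc al) * Dh x
  else if h % 2 = 1 then
    (n : TS R) * cc (δ A) * Polynomial.C (p ((h + 1) / 2)) * x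
  else
    -(Polynomial.C (p (h / 2)) * Dh x)

/-!
Induction on `g`. For `n = 1` the quadratic terms are absent, so
`(∂ - ½(δA)²) F⁽¹⁾_g = -∑_{h=1}^{g} 𝒟_h F⁽¹⁾_{g-h}`. Each `𝒟_h` maps `T·(deg_S ≤ d)` into
`T·(deg_S ≤ d + 3h - 1)`, because `𝔇` raises the `S`-degree by at most two on `S`, `T` and
constants, and `deg p_h ≤ 3h - 2`. Writing `G = ∑ Tʲ G_j`, the operator `∂ - ½(δA)²` acts on
`G_j` as `G_j' + (j - 1)·½(δA)²·G_j`; since `a' = λa` has no nonzero polynomial solution for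
`λ ≠ 0`, only `G_1` survives, and `G_1'` of degree `≤ 3g - 1` forces `deg G_1 ≤ 3g`.
-/

open Finset

section Sectors

variable {R : Type*} [CommRing R]

def InSector (k d : ℕ) (x : TS R) : Prop :=
  ∃ q : R[X], q.natDegree ≤ d ∧ x = Tv ^ k * C q

theorem inSector_C (a : R[X]) : InSector 0 a.natDegree (C a) :=
  ⟨a, le_rfl, by rw [pow_zero, one_mul]⟩

theorem inSector_cc (r : R) : InSector 0 0 (cc r) :=
  ⟨C r, (natDegree_C r).le, by simp [cc]⟩

theorem inSector_Sv : InSector 0 1 (Sv : TS R) :=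
  ⟨X, natDegree_X_le, by simp [Sv]⟩

theorem inSector_natCast (n : ℕ) : InSector 0 0 (n : TS R) := by
  simpa [cc] using inSector_cc (n : R)

namespace InSector

variable {k d e : ℕ} {x y : TS R}

theorem mono (hx : InSector k d x) (h : d ≤ e) : InSector k e x :=
  let ⟨q, hq, hx⟩ := hx
  ⟨q, hq.trans h, hx⟩

theorem add (hx : InSector k d x) (hy : InSector k e y) : InSector k (max d e) (x + y) := by
  obtain ⟨a, ha, rfl⟩ := hx
  obtain ⟨b, hb, rfl⟩ := hy
  exact ⟨a + b, natDegree_add_le_of_le ha hb, by rw [map_add, mul_add]⟩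

theorem neg (hx : InSector k d x) : InSector k d (-x) := by
  obtain ⟨a, ha, rfl⟩ := hx
  exact ⟨-a, (natDegree_neg a).trans_le ha, by rw [map_neg]; ring⟩

theorem sub (hx : InSector k d x) (hy : InSector k e y) : InSector k (max d e) (x - y) := by
  simpa only [sub_eq_add_neg] using hx.add hy.neg

theorem sum {ι : Type*} {s : Finset ι} {x : ι → TS R} (hx : ∀ i ∈ s, InSector k d (x i)) :
    InSector k d (∑ i ∈ s, x i) := by
  induction s using Finset.cons_induction with
  | empty => exact ⟨0, natDegree_zero.trans_le (Nat.zero_le d), by simp⟩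
  | cons i s hi ih =>
    rw [sum_cons]
    simpa using (hx i (mem_cons_self i s)).add (ih fun j hj => hx j (mem_cons_of_mem hj))

theorem mul (hy : InSector 0 e y) (hx : InSector k d x) : InSector k (e + d) (y * x) := by
  obtain ⟨a, ha, rfl⟩ := hy
  obtain ⟨b, hb, rfl⟩ := hx
  exact ⟨a * b, natDegree_mul_le_of_le ha hb, by rw [map_mul]; ring⟩

theorem pow (hy : InSector 0 e y) (n : ℕ) : InSector 0 (n * e) (y ^ n) := by
  induction n with
  | zero => simpa using inSector_natCast (R := R) 1
  | succ n ih => simpa [pow_succ', add_mul, add_comm] using hy.mul ih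

theorem smul [Algebra ℚ R] (r : ℚ) (hx : InSector k d x) : InSector k d (r • x) := by
  obtain ⟨a, ha, rfl⟩ := hx
  exact ⟨r • a, (natDegree_smul_le r a).trans ha, by rw [← smul_C, mul_smul_comm]⟩

end InSector

end Sectors

theorem Derivation.leibniz_pow_of_eq_mul {S A : Type*} [CommSemiring S] [CommSemiring A]
    [Algebra S A] (D : Derivation S A A) {a b : A} (h : D a = b * a) (n : ℕ) :
    D (a ^ n) = n * b * a ^ n := by
  rw [D.leibniz_pow, h]
  cases n with
  | zero => simp
  | succ n => simp only [smul_eq_mul, nsmul_eq_mul, Nat.add_sub_cancel, pow_succ]; ring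

section Derivations

variable {R : Type*} [CommRing R] [Algebra ℚ R] {D : Derivation ℚ (TS R) (TS R)}

theorem inSector_derivation_C (hC : ∀ r, InSector 0 0 (D (cc r))) (hS : InSector 0 2 (D Sv))
    {a : R[X]} {d : ℕ} (ha : a.natDegree ≤ d) : InSector 0 (d + 2) (D (C a)) := by
  rw [a.as_sum_range' (d + 1) (Nat.lt_succ_of_le ha), map_sum, map_sum]
  refine InSector.sum fun i hi => ?_
  have hi : i ≤ d := Nat.lt_succ_iff.mp (mem_range.mp hi)
  rw [← C_mul_X_pow_eq_monomial, map_mul, map_pow, show C (C (a.coeff i)) = cc (a.coeff i) from rfl,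
    show (C X : TS R) = Sv from rfl, D.leibniz, D.leibniz_pow, smul_eq_mul, smul_eq_mul,
    nsmul_eq_mul, smul_eq_mul]
  exact (((inSector_cc _).mul ((inSector_natCast i).mul ((inSector_Sv.pow (i - 1)).mul hS))).add
    ((inSector_Sv.pow i).mul (hC _))).mono (by omega)

theorem InSector.derivation (hC : ∀ r, InSector 0 0 (D (cc r))) (hS : InSector 0 2 (D Sv))
    {b : TS R} (hT : D Tv = b * Tv) (hb : InSector 0 2 b) {k d : ℕ} {x : TS R}
    (hx : InSector k d x) : InSector k (d + 2) (D x) := by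
  obtain ⟨q, hq, rfl⟩ := hx
  obtain ⟨a, ha, hDq⟩ := inSector_derivation_C hC hS hq
  rw [pow_zero, one_mul] at hDq
  have hTq : D (Tv ^ k) * C q = ((k : TS R) * b) * (Tv ^ k * C q) := by
    rw [D.leibniz_pow_of_eq_mul hT]; ring
  rw [D.leibniz, hDq, smul_eq_mul, smul_eq_mul, mul_comm (C q), hTq]
  exact (InSector.add ⟨a, ha, rfl⟩
    (((inSector_natCast k).mul hb).mul ⟨q, hq, rfl⟩)).mono (by omega)

theorem inSector_holomorphic_derivative (δ : Derivation ℚ R R) (c f A : R)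
    (hDhC : ∀ r : R, D (cc r) = cc (δ r)) (hDhS : D Sv = cc f - cc c * Sv ^ 2)
    (hDhT : D Tv = (cc (δ A) * cc (δ (δ A)) * Sv
        + (2 : ℚ)⁻¹ • (cc (δ A) ^ 2 * (cc f - cc c * Sv ^ 2))) * Tv)
    {k d : ℕ} {x : TS R} (hx : InSector k d x) : InSector k (d + 2) (D x) := by
  have hS : InSector 0 2 (cc f - cc c * Sv ^ 2) :=
    ((inSector_cc f).sub ((inSector_cc c).mul (inSector_Sv.pow 2))).mono (by omega)
  refine InSector.derivation (fun r => hDhC r ▸ inSector_cc _) (hDhS ▸ hS) hDhT ?_ hx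
  exact ((((inSector_cc _).mul (inSector_cc _)).mul inSector_Sv).add
    ((((inSector_cc _).pow 2).mul hS).smul _)).mono (by omega)

end Derivations

section Operators

variable {R : Type*} [CommRing R] [Algebra ℚ R]

theorem inSector_dop (δ : Derivation ℚ R R) (c ft al A : R) {p : ℕ → R[X]}
    (hp : ∀ h : ℕ, 2 ≤ h → (p h).natDegree ≤ 3 * h - 2) {Dh : Derivation ℚ (TS R) (TS R)} {k : ℕ}
    (hDh : ∀ {d : ℕ} {x : TS R}, InSector k d x → InSector k (d + 2) (Dh x)) (n : ℕ) {h d : ℕ}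
    (hh : 1 ≤ h) {x : TS R} (hx : InSector k d x) :
    InSector k (d + (3 * h - 1)) (Dop δ c ft al A p Dh n h x) := by
  have hDx := hDh hx
  have hw : InSector 0 1 (cc ft - cc c * Sv) :=
    (inSector_cc ft).sub ((inSector_cc c).mul inSector_Sv)
  have hq₁ : InSector 0 1 ((2 : ℚ)⁻¹ • (cc c * Sv) + cc al) :=
    (((inSector_cc c).mul inSector_Sv).smul _).add (inSector_cc al)
  unfold Dop
  split_ifs with h1 h2 hodd
  · subst h1
    exact ((((((inSector_natCast n).mul ((inSector_cc _).sub (hw.mul (inSector_cc _)))).mul hx).smul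
      _).add (((inSector_natCast n).mul (inSector_cc _)).mul (hDx.add (hq₁.mul hx))))).mono
      (by omega)
  · subst h2
    exact ((((hDh hDx).sub (hw.mul hDx)).smul _).neg.sub (hq₁.mul hDx)).mono (by omega)
  · have := hp ((h + 1) / 2) (by omega)
    exact ((((inSector_natCast n).mul (inSector_cc _)).mul (inSector_C _)).mul hx).mono (by omega)
  · have := hp (h / 2) (by omega)
    exact ((inSector_C _).mul hDx).neg.mono (by omega)

end Operators

theorem Polynomial.eq_zero_of_derivative_eq_C_mul {R : Type*} [CommRing R] [NoZeroDivisors R]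
    {w : R} (hw : w ≠ 0) {a : R[X]} (h : derivative a = C w * a) : a = 0 := by
  by_contra ha
  have htop := congrArg (coeff · a.natDegree) h
  simp only [coeff_derivative, coeff_C_mul, coeff_eq_zero_of_natDegree_lt (Nat.lt_succ_self _),
    zero_mul] at htop
  exact mul_ne_zero hw (leadingCoeff_ne_zero.mpr ha) htop.symm

section PropagatorDerivative

variable {R : Type*} [CommRing R] [Algebra ℚ R] {D : Derivation ℚ (TS R) (TS R)} {w : R}

theorem derivation_C_eq_C_derivative (hC : ∀ r, D (cc r) = 0) (hS : D Sv = 1) (a : R[X]) :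
    D (C a) = C (derivative a) := by
  induction a using Polynomial.induction_on' with
  | add p q hp hq => rw [map_add, map_add, hp, hq, derivative_add, map_add]
  | monomial n r =>
    rw [← C_mul_X_pow_eq_monomial, derivative_C_mul_X_pow, map_mul, map_pow,
      show C (C r) = cc r from rfl, show (C X : TS R) = Sv from rfl, D.leibniz, D.leibniz_pow, hC,
      hS]
    simp only [cc, Sv, smul_eq_mul, mul_one, nsmul_eq_mul, mul_zero, add_zero, map_mul, map_natCast,
      map_pow]
    ring

theorem derivation_Tv_pow_mul_C (hC : ∀ r, D (cc r) = 0) (hS : D Sv = 1)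
    (hT : D Tv = cc w * Tv) (n : ℕ) (a : R[X]) :
    D (Tv ^ n * C a) = Tv ^ n * C (derivative a + C (n * w) * a) := by
  rw [D.leibniz, D.leibniz_pow_of_eq_mul hT, derivation_C_eq_C_derivative hC hS]
  simp only [smul_eq_mul, cc, map_mul, map_natCast, map_add]
  ring

theorem coeff_derivation (hC : ∀ r, D (cc r) = 0) (hS : D Sv = 1) (hT : D Tv = cc w * Tv)
    (G : TS R) (j : ℕ) : (D G).coeff j = derivative (G.coeff j) + C (j * w) * G.coeff j := by
  induction G using Polynomial.induction_on' with
  | add p q hp hq => rw [map_add, coeff_add, coeff_add, hp, hq, derivative_add]; ring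
  | monomial n a =>
    rw [← C_mul_X_pow_eq_monomial, mul_comm, show (X : TS R) = Tv from rfl,
      derivation_Tv_pow_mul_C hC hS hT, show (Tv : TS R) = X from rfl, mul_comm, mul_comm (X ^ n),
      coeff_C_mul_X_pow, coeff_C_mul_X_pow]
    split_ifs with hj
    · rw [hj]
    · simp

theorem exists_eq_Tv_pow_mul_C_of_derivation_sub [IsDomain R] [CharZero R]
    (hC : ∀ r, D (cc r) = 0) (hS : D Sv = 1) (hT : D Tv = cc w * Tv) (hw : w ≠ 0)
    {G : TS R} {k : ℕ} {r : R[X]} (h : D G - (k : TS R) * cc w * G = Tv ^ k * C r) :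
    ∃ q : R[X], derivative q = r ∧ G = Tv ^ k * C q := by
  have hcoeff (j : ℕ) :
      derivative (G.coeff j) - C (((k : R) - j) * w) * G.coeff j = if j = k then r else 0 := by
    have hj := congrArg (coeff · j) h
    simp only [coeff_sub, coeff_derivation hC hS hT] at hj
    rw [show (k : TS R) * cc w = C (C (k * w)) by simp [cc], coeff_C_mul, mul_comm (Tv ^ k),
      show (Tv : TS R) = X from rfl, coeff_C_mul_X_pow] at hj
    rw [← hj, sub_mul, map_sub]
    ring
  refine ⟨G.coeff k, by simpa using hcoeff k, ?_⟩
  ext j : 1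
  rw [mul_comm, show (Tv : TS R) = X from rfl, coeff_C_mul_X_pow]
  split_ifs with hj
  · rw [hj]
  · have hk : (k : R) - j ≠ 0 := sub_ne_zero.mpr (Nat.cast_injective.ne (Ne.symm hj))
    exact eq_zero_of_derivative_eq_C_mul (mul_ne_zero hk hw)
      (sub_eq_zero.mp ((hcoeff j).trans (if_neg hj)))

end PropagatorDerivative

theorem one_instanton_structure_general
    {R : Type*} [CommRing R] [IsDomain R] [Algebra ℚ R]
    (δ : Derivation ℚ R R) (c f ft al A : R) (hA : δ A ≠ 0)
    (p : ℕ → Polynomial R) (hp : ∀ h : ℕ, 2 ≤ h → (p h).natDegree ≤ 3 * h - 2)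
    (Dp Dh : Derivation ℚ (TS R) (TS R))
    (hDpC : ∀ r : R, Dp (cc r) = 0)
    (hDpS : Dp (Sv (R := R)) = 1)
    (hDpT : Dp (Tv (R := R)) = (2 : ℚ)⁻¹ • (cc (δ A) ^ 2 * Tv))
    (hDhC : ∀ r : R, Dh (cc r) = cc (δ r))
    (hDhS : Dh (Sv (R := R)) = cc f - cc c * Sv ^ 2)
    (hDhT : Dh (Tv (R := R)) = (cc (δ A) * cc (δ (δ A)) * Sv
        + (2 : ℚ)⁻¹ • (cc (δ A) ^ 2 * (cc f - cc c * Sv ^ 2))) * Tv)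
    (F : ℕ → ℤ → TS R)
    (heq : ∀ n : ℕ, 1 ≤ n → ∀ g : ℕ,
      Dp (F n (g : ℤ)) - (2 : ℚ)⁻¹ • ((n : TS R) ^ 2 * cc (δ A) ^ 2 * F n (g : ℤ))
        = -(∑ h ∈ Finset.Icc 1 g, Dop δ c ft al A p Dh n h (F n ((g : ℤ) - (h : ℤ))))
          + (2 : ℚ)⁻¹ • ∑ m ∈ Finset.Icc 1 (n - 1), ∑ h ∈ Finset.range g,
              (Dh (F m ((h : ℤ) - 1)) - (m : TS R) * cc (δ A) * F m (h : ℤ))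
              * (Dh (F (n - m) ((g : ℤ) - 2 - (h : ℤ)))
                  - ((n - m : ℕ) : TS R) * cc (δ A) * F (n - m) ((g : ℤ) - 1 - (h : ℤ)))) :
    ∀ g : ℕ, ∃ q : Polynomial R, q.natDegree ≤ 3 * g ∧ F 1 (g : ℤ) = Tv * Polynomial.C q := by
  have := algebraRat.charZero R
  set w := algebraMap ℚ R 2⁻¹ * δ A ^ 2
  have hw : w ≠ 0 := mul_ne_zero ((_root_.map_ne_zero _).mpr (by norm_num)) (pow_ne_zero 2 hA)
  have hsmul (x : TS R) : (2 : ℚ)⁻¹ • (cc (δ A) ^ 2 * x) = cc w * x := by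
    rw [Algebra.smul_def, Polynomial.algebraMap_apply, Polynomial.algebraMap_apply]
    simp only [w, cc, map_mul, map_pow]
    ring
  have hDpT' : Dp Tv = cc w * Tv := by rw [hDpT, hsmul]
  intro g
  induction g using Nat.strong_induction_on with
  | _ g ih =>
  have hode : Dp (F 1 g) - ((1 : ℕ) : TS R) * cc w * F 1 g
      = -∑ h ∈ Icc 1 g, Dop δ c ft al A p Dh 1 h (F 1 (g - h)) := by
    simpa [hsmul] using heq 1 le_rfl g
  have hrhs : InSector 1 (3 * g - 1) (-∑ h ∈ Icc 1 g, Dop δ c ft al A p Dh 1 h (F 1 (g - h))) := by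
    refine (InSector.sum fun h hh => ?_).neg
    obtain ⟨h1, hg⟩ := mem_Icc.mp hh
    obtain ⟨q, hq, hF⟩ := ih (g - h) (by omega)
    rw [← Nat.cast_sub hg, hF]
    exact (inSector_dop δ c ft al A hp (inSector_holomorphic_derivative δ c f A hDhC hDhS hDhT)
      1 h1 ⟨q, hq, by rw [pow_one]⟩).mono (by omega)
  rcases g with _ | g
  · obtain ⟨q, hq, hF⟩ := exists_eq_Tv_pow_mul_C_of_derivation_sub hDpC hDpS hDpT' hw
      (hode.trans (by simp : _ = Tv ^ 1 * C 0))
    exact ⟨q, (derivative_eq_zero.mp hq).le, by simpa using hF⟩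
  · obtain ⟨r, hr, hr'⟩ := hrhs
    obtain ⟨q, rfl, hF⟩ := exists_eq_Tv_pow_mul_C_of_derivation_sub hDpC hDpS hDpT' hw
      (hode.trans hr')
    exact ⟨q, by have := natDegree_derivative q; omega, by simpa using hF⟩

/-- One-instanton structure of transseries solutions of the nonperturbative holomorphic
anomaly equations: for every `g`, the one-instanton free energy `F^{(1)}_g` is the
exponential `T` times a polynomial in the propagator `S` of degree at most `3g`. -/
theorem one_instanton_structure
    {R : Type*} [CommRing R] [IsDomain R] [Algebra ℚ R]
    (δ : Derivation ℚ R R) (c f ft al A : R) (hA : δ A ≠ 0)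
    (p : ℕ → Polynomial R) (hp : ∀ h : ℕ, 2 ≤ h → (p h).natDegree ≤ 3 * h - 2)
    (Dp Dh : Derivation ℚ (TS R) (TS R))
    (hDpC : ∀ r : R, Dp (cc r) = 0)
    (hDpS : Dp (Sv (R := R)) = 1)
    (hDpT : Dp (Tv (R := R)) = (2 : ℚ)⁻¹ • (cc (δ A) ^ 2 * Tv))
    (hDhC : ∀ r : R, Dh (cc r) = cc (δ r))
    (hDhS : Dh (Sv (R := R)) = cc f - cc c * Sv ^ 2)
    (hDhT : Dh (Tv (R := R)) = (cc (δ A) * cc (δ (δ A)) * Sv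
        + (2 : ℚ)⁻¹ • (cc (δ A) ^ 2 * (cc f - cc c * Sv ^ 2))) * Tv)
    (F : ℕ → ℤ → TS R)
    (hFneg : ∀ (n : ℕ) (j : ℤ), j < 0 → F n j = 0)
    (heq : ∀ n : ℕ, 1 ≤ n → ∀ g : ℕ,
      Dp (F n (g : ℤ)) - (2 : ℚ)⁻¹ • ((n : TS R) ^ 2 * cc (δ A) ^ 2 * F n (g : ℤ))
        = -(∑ h ∈ Finset.Icc 1 g, Dop δ c ft al A p Dh n h (F n ((g : ℤ) - (h : ℤ))))
          + (2 : ℚ)⁻¹ • ∑ m ∈ Finset.Icc 1 (n - 1), ∑ h ∈ Finset.range g,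
              (Dh (F m ((h : ℤ) - 1)) - (m : TS R) * cc (δ A) * F m (h : ℤ))
              * (Dh (F (n - m) ((g : ℤ) - 2 - (h : ℤ)))
                  - ((n - m : ℕ) : TS R) * cc (δ A) * F (n - m) ((g : ℤ) - 1 - (h : ℤ)))) :
    ∀ g : ℕ, ∃ q : Polynomial R, q.natDegree ≤ 3 * g ∧ F 1 (g : ℤ) = Tv * Polynomial.C q :=
  one_instanton_structure_general δ c f ft al A hA p hp Dp Dh hDpC hDpS hDpT hDhC hDhS hDhT F heq

end
end

section
/- In the transseries model described in the context, suppose the family (F^{(n)}_g)_{n≥1,g≥0} satisfies the nonperturbative holomorphic anomaly equations. Then for every n ≥ 1 and g ≥ 0, F^{(n)}_g lies in the R-submodule Σ_π T^{Σ_i π_i²} · { p ∈ R[S] : deg_S p ≤ 3(g + 1 − ℓ(π)) }, the sum running over all integer partitions π of n, with parts π_i counted with multiplicity and ℓ(π) the total number of parts; summands with 3(g + 1 − ℓ(π)) < 0 are understood to be zero. In particular the anti-holomorphic dependence of every multi-instanton free energy is a finite sum of exponentials of the propagator multiplied by polynomials of controlled degree. -/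
open Polynomial

noncomputable section

/-!
The invariant is the `R`-submodule `sector R n d` of `R[S,T]` spanned by the monomials
`S^j T^{Σ πᵢ²}` with `π` a partition of `n` and `j + 3 ℓ(π) ≤ d`; by induction on `n` and then
on `g`, `F^{(n)}_g ∈ sector R n (3g + 3)`. Sectors multiply, concatenating the partitions, and
`𝔇` raises the weight `d` by 2 (it multiplies `T` by a quadratic in `S`), so `𝒟^{(n)}_h` raises
it by `3h - 1`: the right-hand side of the anomaly equation lies in `sector R n (3g + 3)`, its
linear part even in `sector R n (3g + 2)`. On a `T^k`-coefficient `u` the left-hand side acts as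
`u ↦ u' + ((k - n²)/2)(δA)² u`. For `k ≠ n²` this does not lower the degree, since `δA ≠ 0`. For
`k = n²` it is `u ↦ u'`, which loses one degree; this is paid for because the quadratic part
has no `T^{n²}` term (a product of sectors `a, b ≥ 1` only meets `T^k` with
`k ≤ a² + b² < (a + b)²`) and the linear part has weight `3g + 2`.
-/

namespace MultiInstanton

section Partitions

variable {a b n : ℕ}

def sumSq (π : n.Partition) : ℕ := (π.parts.map (· ^ 2)).sum

def append (π : a.Partition) (ρ : b.Partition) : (a + b).Partition where
  parts := π.parts + ρ.parts
  parts_pos hi := (Multiset.mem_add.mp hi).elim π.parts_pos ρ.parts_pos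
  parts_sum := by rw [Multiset.sum_add, π.parts_sum, ρ.parts_sum]

lemma sumSq_append (π : a.Partition) (ρ : b.Partition) :
    sumSq (append π ρ) = sumSq π + sumSq ρ := by
  simp [sumSq, append]

lemma card_append (π : a.Partition) (ρ : b.Partition) :
    (append π ρ).parts.card = π.parts.card + ρ.parts.card :=
  Multiset.card_add _ _

lemma sumSq_le (π : n.Partition) : sumSq π ≤ n ^ 2 := by
  calc sumSq π ≤ (π.parts.map (· * n)).sum :=
        Multiset.sum_map_le_sum_map _ _ fun i hi => by
          rw [sq]; exact Nat.mul_le_mul_left i (π.le_of_mem_parts hi)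
    _ = n ^ 2 := by rw [Multiset.sum_map_mul_right, Multiset.map_id', π.parts_sum, sq]

lemma one_le_card_parts (hn : 1 ≤ n) (π : n.Partition) : 1 ≤ π.parts.card :=
  Multiset.card_pos.mpr fun h => by
    have := π.parts_sum
    rw [h, Multiset.sum_zero] at this
    omega

lemma sumSq_indiscrete (hn : n ≠ 0) : sumSq (Nat.Partition.indiscrete n) = n ^ 2 := by
  simp [sumSq, Nat.Partition.indiscrete_parts hn]

lemma card_indiscrete (hn : n ≠ 0) : (Nat.Partition.indiscrete n).parts.card = 1 := by
  simp [Nat.Partition.indiscrete_parts hn]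

end Partitions

section Sector

variable {R : Type*} [CommRing R]

def IsAllowed (n : ℕ) (d : ℤ) (k j : ℕ) : Prop :=
  ∃ π : n.Partition, sumSq π = k ∧ (j : ℤ) + 3 * π.parts.card ≤ d

variable (R) in
def sector (n : ℕ) (d : ℤ) : Submodule R (TS R) :=
  Submodule.span R {x | ∃ k j, IsAllowed n d k j ∧ x = Sv ^ j * Tv ^ k}

lemma IsAllowed.mono {n : ℕ} {d d' : ℤ} {k j i : ℕ} (h : IsAllowed n d k j)
    (hij : (i : ℤ) + d ≤ j + d') : IsAllowed n d' k i := by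
  obtain ⟨π, hπ, hj⟩ := h
  exact ⟨π, hπ, by omega⟩

lemma Sv_pow_mul_Tv_pow (j k : ℕ) : (Sv ^ j * Tv ^ k : TS R) = C (X ^ j) * X ^ k := by
  simp [Sv, Tv]

lemma coeff_coeff_Sv_pow_mul_Tv_pow (j k j' k' : ℕ) :
    ((Sv ^ j * Tv ^ k : TS R).coeff k').coeff j' = if k' = k ∧ j' = j then 1 else 0 := by
  rw [Sv_pow_mul_Tv_pow, coeff_C_mul_X_pow]
  by_cases hk : k' = k <;> simp [hk, coeff_X_pow]

lemma smul_eq_cc_mul (r : R) (x : TS R) : r • x = cc r * x := by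
  rw [Algebra.smul_def]; rfl

lemma mem_sector_iff {n : ℕ} {d : ℤ} {x : TS R} :
    x ∈ sector R n d ↔ ∀ k j, (x.coeff k).coeff j ≠ 0 → IsAllowed n d k j := by
  constructor
  · intro hx
    induction hx using Submodule.span_induction with
    | mem x hx =>
      obtain ⟨k, j, hkj, rfl⟩ := hx
      intro k' j' h
      rw [coeff_coeff_Sv_pow_mul_Tv_pow] at h
      obtain ⟨rfl, rfl⟩ := (ite_ne_right_iff.mp h).1
      exact hkj
    | zero => simp
    | add x y _ _ hx hy =>
      intro k j h
      rw [coeff_add, coeff_add] at h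
      by_cases hx0 : (x.coeff k).coeff j = 0
      · exact hy k j (by simpa [hx0] using h)
      · exact hx k j hx0
    | smul r x _ hx =>
      intro k j h
      rw [coeff_smul, coeff_smul, smul_eq_mul] at h
      exact hx k j (right_ne_zero_of_mul h)
  · intro hx
    rw [as_sum_support_C_mul_X_pow x]
    refine Submodule.sum_mem _ fun k _ => ?_
    rw [as_sum_support_C_mul_X_pow (x.coeff k), map_sum, Finset.sum_mul]
    refine Submodule.sum_mem _ fun j hj => ?_
    have hterm : (C (C ((x.coeff k).coeff j) * X ^ j) * X ^ k : TS R)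
        = (x.coeff k).coeff j • (Sv ^ j * Tv ^ k) := by
      rw [smul_eq_cc_mul, Sv_pow_mul_Tv_pow, cc, map_mul, mul_assoc]
    rw [hterm]
    exact Submodule.smul_mem _ _
      (Submodule.subset_span ⟨k, j, hx k j (mem_support_iff.mp hj), rfl⟩)

def RaisesWeight (D : TS R → TS R) (e : ℤ) : Prop :=
  ∀ ⦃n : ℕ⦄ ⦃d : ℤ⦄ ⦃x : TS R⦄, x ∈ sector R n d → D x ∈ sector R n (d + e)

lemma sector_mono {n : ℕ} {d d' : ℤ} (h : d ≤ d') : sector R n d ≤ sector R n d' :=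
  Submodule.span_mono fun _ ⟨k, j, hkj, hx⟩ => ⟨k, j, hkj.mono (by omega), hx⟩

lemma mem_sector_of_le {n n' : ℕ} {d d' : ℤ} {x : TS R} (hx : x ∈ sector R n d)
    (hn : n = n' := by omega) (hd : d ≤ d' := by omega) : x ∈ sector R n' d' :=
  hn ▸ sector_mono hd hx

lemma sector_mul_le (a b : ℕ) (d e : ℤ) :
    sector R a d * sector R b e ≤ sector R (a + b) (d + e) := by
  rw [sector, sector, Submodule.span_mul_span]
  refine Submodule.span_le.mpr (Set.mul_subset_iff.mpr ?_)
  rintro _ ⟨k, j, ⟨π, rfl, hπ⟩, rfl⟩ _ ⟨k', j', ⟨ρ, rfl, hρ⟩, rfl⟩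
  refine Submodule.subset_span ⟨_, j + j', ⟨append π ρ, sumSq_append π ρ, ?_⟩, ?_⟩
  · push_cast [card_append]; omega
  · ring

lemma mul_mem_sector {a b : ℕ} {d e : ℤ} {x y : TS R} (hx : x ∈ sector R a d)
    (hy : y ∈ sector R b e) : x * y ∈ sector R (a + b) (d + e) :=
  sector_mul_le a b d e (Submodule.mul_mem_mul hx hy)

lemma C_mem_sector {u : R[X]} {e : ℤ} (hu : (u.natDegree : ℤ) ≤ e) : C u ∈ sector R 0 e := by
  refine mem_sector_iff.mpr fun k j h => ?_
  rw [coeff_C] at h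
  split_ifs at h with hk
  · have := le_natDegree_of_ne_zero h
    exact ⟨default, by rw [hk]; rfl, by rw [Nat.Partition.partition_zero_parts, Multiset.card_zero]; omega⟩
  · simp at h

lemma cc_mem_sector (r : R) : cc r ∈ sector R 0 0 := C_mem_sector (by simp)

lemma Sv_mem_sector : (Sv : TS R) ∈ sector R 0 1 :=
  C_mem_sector (by simpa using natDegree_X_le)

lemma natCast_mem_sector (m : ℕ) : (m : TS R) ∈ sector R 0 0 := by
  rw [← map_natCast C]; exact C_mem_sector (by simp)

lemma le_sq_of_coeff_ne_zero {n : ℕ} {d : ℤ} {x : TS R} (hx : x ∈ sector R n d) {k : ℕ}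
    (hk : x.coeff k ≠ 0) : k ≤ n ^ 2 := by
  obtain ⟨π, rfl, -⟩ := mem_sector_iff.mp hx k _ (leadingCoeff_ne_zero.mpr hk)
  exact sumSq_le π

lemma coeff_sq_mul_eq_zero {a b : ℕ} (ha : 1 ≤ a) (hb : 1 ≤ b) {d e : ℤ} {x y : TS R}
    (hx : x ∈ sector R a d) (hy : y ∈ sector R b e) : (x * y).coeff ((a + b) ^ 2) = 0 := by
  rw [coeff_mul]
  refine Finset.sum_eq_zero fun il hil => ?_
  rw [Finset.HasAntidiagonal.mem_antidiagonal] at hil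
  by_contra h
  have hi := le_sq_of_coeff_ne_zero hx (left_ne_zero_of_mul h)
  have hl := le_sq_of_coeff_ne_zero hy (right_ne_zero_of_mul h)
  nlinarith

section Derivation

variable [Algebra ℚ R]

lemma derivation_pow_of_eq_mul {A : Type*} [CommRing A] [Algebra ℚ A] (D : Derivation ℚ A A)
    {t γ : A} (ht : D t = γ * t) (k : ℕ) : D (t ^ k) = k • (γ * t ^ k) := by
  rw [Derivation.leibniz_pow, ht]
  cases k with
  | zero => simp
  | succ k => rw [Nat.add_sub_cancel, smul_eq_mul, pow_succ]; ring

lemma raisesWeight_of_derivation (D : Derivation ℚ (TS R) (TS R)) {e : ℤ} {γ : TS R}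
    (hC : ∀ r, D (cc r) ∈ sector R 0 e) (hS : D Sv ∈ sector R 0 (e + 1))
    (hT : D Tv = γ * Tv) (hγ : γ ∈ sector R 0 e) : RaisesWeight D e := by
  intro n d x hx
  induction hx using Submodule.span_induction with
  | mem x hx =>
    obtain ⟨k, j, hkj, rfl⟩ := hx
    have hmon : Sv ^ j * Tv ^ k ∈ sector R n d := Submodule.subset_span ⟨k, j, hkj, rfl⟩
    rw [Derivation.leibniz, derivation_pow_of_eq_mul D hT, smul_eq_mul, smul_eq_mul]
    refine add_mem ?_ ?_
    · rw [show Sv ^ j * (k • (γ * Tv ^ k)) = k • (γ * (Sv ^ j * Tv ^ k)) by ring]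
      exact nsmul_mem (mem_sector_of_le (mul_mem_sector hγ hmon)) k
    · cases j with
      | zero => simp
      | succ i =>
        have hmon' : Sv ^ i * Tv ^ k ∈ sector R n (d - 1) :=
          Submodule.subset_span ⟨k, i, hkj.mono (by push_cast; omega), rfl⟩
        rw [Derivation.leibniz_pow, Nat.add_sub_cancel, smul_eq_mul,
          show Tv ^ k * ((i + 1) • (Sv ^ i * D Sv)) = (i + 1) • (Sv ^ i * Tv ^ k * D Sv) by ring]
        exact nsmul_mem (mem_sector_of_le (mul_mem_sector hmon' hS)) _
  | zero => simp
  | add x y _ _ hx hy => rw [map_add]; exact add_mem hx hy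
  | smul r x hx' hx =>
    rw [smul_eq_cc_mul, Derivation.leibniz, smul_eq_mul, smul_eq_mul, ← smul_eq_cc_mul]
    exact add_mem (Submodule.smul_mem _ r hx) (mem_sector_of_le (mul_mem_sector hx' (hC r)))

lemma coeff_derivation (D : Derivation ℚ (TS R) (TS R)) (ε : R[X] →+ R[X]) {γ : R[X]}
    (hC : ∀ u, D (C u) = C (ε u)) (hX : D X = C γ * X) (x : TS R) (k : ℕ) :
    (D x).coeff k = ε (x.coeff k) + k * γ * x.coeff k := by
  induction x using Polynomial.induction_on' with
  | add x y hx hy => rw [map_add, coeff_add, hx, hy, coeff_add, map_add]; ring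
  | monomial j u =>
    rw [← C_mul_X_pow_eq_monomial, Derivation.leibniz, derivation_pow_of_eq_mul D hX, hC,
      smul_eq_mul, smul_eq_mul, nsmul_eq_mul,
      show C u * ((j : TS R) * (C γ * X ^ j)) + X ^ j * C (ε u) = C (j * γ * u + ε u) * X ^ j by
        simp only [map_add, map_mul, map_natCast]; ring,
      coeff_C_mul_X_pow, coeff_C_mul_X_pow]
    split_ifs with hk
    · rw [hk]; ring
    · simp

lemma propagatorDerivation_C {Dp : Derivation ℚ (TS R) (TS R)} (hC : ∀ r, Dp (cc r) = 0)
    (hS : Dp Sv = 1) (u : R[X]) : Dp (C u) = C (derivative u) := by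
  induction u using Polynomial.induction_on' with
  | add u v hu hv => rw [map_add, map_add, hu, hv, derivative_add, map_add]
  | monomial j a =>
    rw [← C_mul_X_pow_eq_monomial, derivative_C_mul_X_pow,
      show (C (C a * X ^ j) : TS R) = cc a * Sv ^ j by simp [cc, Sv],
      Derivation.leibniz, Derivation.leibniz_pow, hC, hS]
    simp only [cc, Sv, smul_eq_mul, mul_one, nsmul_eq_mul, mul_zero, add_zero, map_mul,
      map_natCast, map_pow]
    ring

lemma coeff_propagatorDerivation_sub {δ : Derivation ℚ R R} {A : R}
    {Dp : Derivation ℚ (TS R) (TS R)} (hC : ∀ r, Dp (cc r) = 0) (hS : Dp Sv = 1) (hT : Dp Tv = (2 : ℚ)⁻¹ • (cc (δ A) ^ 2 * Tv))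
    (n : ℕ) (x : TS R) (k : ℕ) :
    (Dp x - (2 : ℚ)⁻¹ • ((n : TS R) ^ 2 * cc (δ A) ^ 2 * x)).coeff k
      = derivative (x.coeff k) + C ((k - n ^ 2 : R) * ((2 : ℚ)⁻¹ • δ A ^ 2)) * x.coeff k := by
  have hX : Dp X = C (C ((2 : ℚ)⁻¹ • δ A ^ 2)) * X := by
    rw [← Tv, hT, ← smul_mul_assoc, cc, ← map_pow, ← map_pow, smul_C, smul_C, Tv]
  have hmul : (2 : ℚ)⁻¹ • ((n : TS R) ^ 2 * cc (δ A) ^ 2 * x)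
      = C (C (n ^ 2 * ((2 : ℚ)⁻¹ • δ A ^ 2))) * x := by
    rw [← smul_mul_assoc, ← mul_smul_comm, cc, ← map_pow, ← map_pow, smul_C, smul_C]
    simp only [map_mul, map_pow, map_natCast]
  rw [coeff_sub, coeff_derivation Dp (derivative (R := R)).toAddMonoidHom
    (propagatorDerivation_C hC hS) hX, hmul, coeff_C_mul]
  simp only [LinearMap.toAddMonoidHom_coe, map_mul, map_sub, map_pow, map_natCast]
  ring

end Derivation

lemma natDegree_coeff_add_three_le {n : ℕ} (hn : 1 ≤ n) {d : ℤ} {x : TS R}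
    (hx : x ∈ sector R n d) {k : ℕ} (hk : x.coeff k ≠ 0) : ((x.coeff k).natDegree : ℤ) + 3 ≤ d := by
  obtain ⟨π, -, hπ⟩ := mem_sector_iff.mp hx k _ (leadingCoeff_ne_zero.mpr hk)
  have := one_le_card_parts hn π
  omega

lemma coeff_natDegree_derivative_add_C_mul (u : R[X]) (e : R) :
    (derivative u + C e * u).coeff u.natDegree = e * u.leadingCoeff := by
  rw [coeff_add, coeff_derivative, coeff_eq_zero_of_natDegree_lt (Nat.lt_succ_self _), zero_mul,
    zero_add, coeff_C_mul, coeff_natDegree]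

lemma mem_sector_of_coeff_eq [IsDomain R] [CharZero R] {n : ℕ} (hn : 1 ≤ n) {d : ℤ}
    (hd : 3 ≤ d) {a : R} (ha : a ≠ 0) {x y₁ y₂ : TS R}
    (hxy : ∀ k, derivative (x.coeff k) + C ((k - n ^ 2 : R) * a) * x.coeff k
      = (y₁ + y₂).coeff k)
    (hy₁ : y₁ ∈ sector R n (d - 1)) (hy₂ : y₂ ∈ sector R n d) (hy₂n : y₂.coeff (n ^ 2) = 0) :
    x ∈ sector R n d := by
  refine mem_sector_iff.mpr fun k j hj => ?_
  have hu : x.coeff k ≠ 0 := fun h => hj (by rw [h, coeff_zero])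
  have hjle := le_natDegree_of_ne_zero hj
  by_cases hk : k = n ^ 2
  · subst hk
    have hu' : derivative (x.coeff (n ^ 2)) = y₁.coeff (n ^ 2) := by
      have := hxy (n ^ 2)
      push_cast at this
      simpa [hy₂n] using this
    have hdeg : ((x.coeff (n ^ 2)).natDegree : ℤ) + 3 ≤ d := by
      by_cases h0 : (x.coeff (n ^ 2)).natDegree = 0
      · omega
      · have := natDegree_coeff_add_three_le hn hy₁ (hu' ▸ derivative_ne_zero.mpr h0)
        rw [← hu', natDegree_derivative] at this
        omega
    exact ⟨.indiscrete n, sumSq_indiscrete (by omega), by rw [card_indiscrete (by omega)]; omega⟩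
  · have he : (k - n ^ 2 : R) * a ≠ 0 :=
      mul_ne_zero (sub_ne_zero.mpr (by exact_mod_cast hk)) ha
    have hr := coeff_natDegree_derivative_add_C_mul (x.coeff k) ((k - n ^ 2 : R) * a)
    rw [hxy k] at hr
    exact (mem_sector_iff.mp (add_mem (mem_sector_of_le hy₁) hy₂) k _
      (hr ▸ mul_ne_zero he (leadingCoeff_ne_zero.mpr hu))).mono (by omega)

lemma exists_sum_partitions_of_mem_sector {n g : ℕ} {x : TS R}
    (hx : x ∈ sector R n (3 * g + 3)) :
    ∃ q : n.Partition → R[X],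
      (∀ π : n.Partition, π.parts.card ≤ g + 1 →
          (q π).natDegree ≤ 3 * (g + 1 - π.parts.card))
      ∧ (∀ π : n.Partition, g + 1 < π.parts.card → q π = 0)
      ∧ x = ∑ π : n.Partition, Tv ^ sumSq π * C (q π) := by
  classical
  induction hx using Submodule.span_induction with
  | mem x hx =>
    obtain ⟨_, j, ⟨π, rfl, hπ⟩, rfl⟩ := hx
    refine ⟨fun ρ => if ρ = π then X ^ j else 0, fun ρ hρ => ?_, fun ρ hρ => ?_, ?_⟩
    · dsimp only
      split_ifs with h
      · subst h; have := natDegree_X_pow_le (R := R) j; omega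
      · simp
    · dsimp only
      rw [if_neg]; rintro rfl; omega
    · rw [Fintype.sum_eq_single π fun ρ hρ => by simp [hρ]]
      simp [Sv, mul_comm]
  | zero => exact ⟨0, by simp, by simp, by simp⟩
  | add x y _ _ hx hy =>
    obtain ⟨q, hq, hq0, rfl⟩ := hx
    obtain ⟨q', hq', hq0', rfl⟩ := hy
    refine ⟨q + q', fun π hπ => natDegree_add_le_of_degree_le (hq π hπ) (hq' π hπ),
      fun π hπ => by simp [hq0 π hπ, hq0' π hπ], ?_⟩
    simp only [Pi.add_apply, map_add, mul_add, Finset.sum_add_distrib]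
  | smul r x _ hx =>
    obtain ⟨q, hq, hq0, rfl⟩ := hx
    refine ⟨r • q, fun π hπ => (natDegree_smul_le r _).trans (hq π hπ),
      fun π hπ => by simp [hq0 π hπ], ?_⟩
    simp only [Finset.smul_sum, Pi.smul_apply, ← smul_C, mul_smul_comm]

section Operators

variable [Algebra ℚ R] {δ : Derivation ℚ R R} {c f ft al A : R} {p : ℕ → R[X]}
  {Dh : Derivation ℚ (TS R) (TS R)}

lemma holomorphicDerivation_raisesWeight (hC : ∀ r : R, Dh (cc r) = cc (δ r))
    (hS : Dh Sv = cc f - cc c * Sv ^ 2)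
    (hT : Dh Tv = (cc (δ A) * cc (δ (δ A)) * Sv
        + (2 : ℚ)⁻¹ • (cc (δ A) ^ 2 * (cc f - cc c * Sv ^ 2))) * Tv) :
    RaisesWeight Dh 2 := by
  have hDhS : cc f - cc c * Sv ^ 2 ∈ sector R 0 2 := by
    rw [sq]
    exact sub_mem (mem_sector_of_le (cc_mem_sector f))
      (mem_sector_of_le (mul_mem_sector (cc_mem_sector c)
        (mul_mem_sector Sv_mem_sector Sv_mem_sector)))
  refine raisesWeight_of_derivation Dh (fun r => hC r ▸ mem_sector_of_le (cc_mem_sector _))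
    (hS ▸ mem_sector_of_le hDhS) hT (add_mem ?_ ?_)
  · exact mem_sector_of_le
      (mul_mem_sector (mul_mem_sector (cc_mem_sector _) (cc_mem_sector _)) Sv_mem_sector)
  · rw [sq]
    exact Submodule.smul_of_tower_mem _ _ (mem_sector_of_le
      (mul_mem_sector (mul_mem_sector (cc_mem_sector _) (cc_mem_sector _)) hDhS))

lemma Dop_mem_sector (hDh : RaisesWeight Dh 2)
    (hp : ∀ h : ℕ, 2 ≤ h → (p h).natDegree ≤ 3 * h - 2) {n h : ℕ} (hh : 1 ≤ h) {e : ℤ}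
    {x : TS R} (hx : x ∈ sector R n e) :
    Dop δ c ft al A p Dh n h x ∈ sector R n (e + 3 * h - 1) := by
  have hcS (a : R) : cc a * Sv ∈ sector R 0 1 :=
    mem_sector_of_le (mul_mem_sector (cc_mem_sector a) Sv_mem_sector)
  have hB : cc ft - cc c * Sv ∈ sector R 0 1 :=
    sub_mem (mem_sector_of_le (cc_mem_sector ft)) (hcS c)
  have hq₁ : (2 : ℚ)⁻¹ • (cc c * Sv) + cc al ∈ sector R 0 1 :=
    add_mem (Submodule.smul_of_tower_mem _ _ (hcS c)) (mem_sector_of_le (cc_mem_sector al))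
  have hnA : (n : TS R) * cc (δ A) ∈ sector R 0 0 :=
    mem_sector_of_le (mul_mem_sector (natCast_mem_sector n) (cc_mem_sector _))
  have hp' {i : ℕ} (hi : 2 ≤ i) : C (p i) ∈ sector R 0 (3 * i - 2) :=
    C_mem_sector (by have := hp i hi; omega)
  unfold Dop
  split_ifs with h1 h2 hodd
  · subst h1
    have hB' : cc (δ (δ A)) - (cc ft - cc c * Sv) * cc (δ A) ∈ sector R 0 1 := sub_mem
      (mem_sector_of_le (cc_mem_sector _)) (mem_sector_of_le (mul_mem_sector hB (cc_mem_sector _)))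
    have hL : Dh x + ((2 : ℚ)⁻¹ • (cc c * Sv) + cc al) * x ∈ sector R n (e + 2) :=
      add_mem (hDh hx) (mem_sector_of_le (mul_mem_sector hq₁ hx))
    exact add_mem (Submodule.smul_of_tower_mem _ _
      (mem_sector_of_le (mul_mem_sector (mul_mem_sector (natCast_mem_sector n) hB') hx)))
      (mem_sector_of_le (mul_mem_sector hnA hL))
  · subst h2
    refine sub_mem (neg_mem (Submodule.smul_of_tower_mem _ _ (sub_mem (mem_sector_of_le
      (hDh (hDh hx))) (mem_sector_of_le (mul_mem_sector hB (hDh hx))))))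
      (mem_sector_of_le (mul_mem_sector hq₁ (hDh hx)))
  · exact mem_sector_of_le (mul_mem_sector (mul_mem_sector hnA (hp' (i := (h + 1) / 2)
      (by omega))) hx)
  · exact neg_mem (mem_sector_of_le (mul_mem_sector (hp' (i := h / 2) (by omega)) (hDh hx)))

lemma neg_sum_Dop_mem_sector (hDh : RaisesWeight Dh 2)
    (hp : ∀ h : ℕ, 2 ≤ h → (p h).natDegree ≤ 3 * h - 2) {n g : ℕ} {F : ℤ → TS R}
    (hF : ∀ j : ℤ, j < g → F j ∈ sector R n (3 * j + 3)) :
    -(∑ h ∈ Finset.Icc 1 g, Dop δ c ft al A p Dh n h (F ((g : ℤ) - (h : ℤ))))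
      ∈ sector R n (3 * g + 2) := by
  refine neg_mem (Submodule.sum_mem _ fun h hh => ?_)
  obtain ⟨h1, hg⟩ := Finset.mem_Icc.mp hh
  exact mem_sector_of_le (Dop_mem_sector hDh hp h1 (hF _ (by omega)))

lemma instantonFactor_mem_sector (hDh : RaisesWeight Dh 2)
    {m : ℕ} {F : ℤ → TS R} (hF : ∀ j : ℤ, F j ∈ sector R m (3 * j + 3)) {i j : ℤ}
    (hij : i + 1 = j) : Dh (F i) - (m : TS R) * cc (δ A) * F j ∈ sector R m (3 * j + 3) :=
  sub_mem (mem_sector_of_le (hDh (hF i))) (mem_sector_of_le (mul_mem_sector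
    (mul_mem_sector (natCast_mem_sector m) (cc_mem_sector _)) (hF j)))

lemma quadraticTerm_mem_sector (hDh : RaisesWeight Dh 2)
    {n g : ℕ} {F : ℕ → ℤ → TS R}
    (hF : ∀ m, 1 ≤ m → m < n → ∀ j : ℤ, F m j ∈ sector R m (3 * j + 3)) :
    (2 : ℚ)⁻¹ • ∑ m ∈ Finset.Icc 1 (n - 1), ∑ h ∈ Finset.range g,
        (Dh (F m ((h : ℤ) - 1)) - (m : TS R) * cc (δ A) * F m (h : ℤ))
        * (Dh (F (n - m) ((g : ℤ) - 2 - (h : ℤ)))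
          - ((n - m : ℕ) : TS R) * cc (δ A) * F (n - m) ((g : ℤ) - 1 - (h : ℤ)))
      ∈ sector R n (3 * g + 3) ⊓ LinearMap.ker ((lcoeff R[X] (n ^ 2)).restrictScalars R) := by
  refine Submodule.smul_of_tower_mem _ _
    (Submodule.sum_mem _ fun m hm => Submodule.sum_mem _ fun h hh => ?_)
  obtain ⟨hm1, hmn⟩ := Finset.mem_Icc.mp hm
  have hh := Finset.mem_range.mp hh
  have hx := instantonFactor_mem_sector (δ := δ) (A := A) hDh (hF m hm1 (by omega))
    (i := h - 1) (j := h) (by ring)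
  have hy := instantonFactor_mem_sector (δ := δ) (A := A) hDh (hF (n - m) (by omega) (by omega))
    (i := (g : ℤ) - 2 - h) (j := (g : ℤ) - 1 - h) (by ring)
  have hcoeff := coeff_sq_mul_eq_zero hm1 (by omega) hx hy
  rw [Nat.add_sub_cancel' (by omega)] at hcoeff
  refine Submodule.mem_inf.mpr ⟨mem_sector_of_le (mul_mem_sector hx hy), ?_⟩
  rw [LinearMap.mem_ker, LinearMap.restrictScalars_apply, lcoeff_apply]
  exact hcoeff

end Operators

end Sector

end MultiInstanton

open MultiInstanton

/-- Structure of transseries solutions of the nonperturbative holomorphic anomaly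
equations: every multi-instanton free energy `F^{(n)}_g` is a sum, over the integer
partitions `π` of `n`, of `T^{Σᵢ πᵢ²}` times a polynomial in the propagator `S` of
degree at most `3(g + 1 − ℓ(π))`, the summands with `3(g + 1 − ℓ(π)) < 0` being zero. -/
theorem multi_instanton_structure
    {R : Type*} [CommRing R] [IsDomain R] [Algebra ℚ R]
    (δ : Derivation ℚ R R) (c f ft al A : R) (hA : δ A ≠ 0)
    (p : ℕ → Polynomial R) (hp : ∀ h : ℕ, 2 ≤ h → (p h).natDegree ≤ 3 * h - 2)
    (Dp Dh : Derivation ℚ (TS R) (TS R))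
    (hDpC : ∀ r : R, Dp (cc r) = 0)
    (hDpS : Dp (Sv (R := R)) = 1)
    (hDpT : Dp (Tv (R := R)) = (2 : ℚ)⁻¹ • (cc (δ A) ^ 2 * Tv))
    (hDhC : ∀ r : R, Dh (cc r) = cc (δ r))
    (hDhS : Dh (Sv (R := R)) = cc f - cc c * Sv ^ 2)
    (hDhT : Dh (Tv (R := R)) = (cc (δ A) * cc (δ (δ A)) * Sv
        + (2 : ℚ)⁻¹ • (cc (δ A) ^ 2 * (cc f - cc c * Sv ^ 2))) * Tv)
    (F : ℕ → ℤ → TS R)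
    (hFneg : ∀ (n : ℕ) (j : ℤ), j < 0 → F n j = 0)
    (heq : ∀ n : ℕ, 1 ≤ n → ∀ g : ℕ,
      Dp (F n (g : ℤ)) - (2 : ℚ)⁻¹ • ((n : TS R) ^ 2 * cc (δ A) ^ 2 * F n (g : ℤ))
        = -(∑ h ∈ Finset.Icc 1 g, Dop δ c ft al A p Dh n h (F n ((g : ℤ) - (h : ℤ))))
          + (2 : ℚ)⁻¹ • ∑ m ∈ Finset.Icc 1 (n - 1), ∑ h ∈ Finset.range g,
              (Dh (F m ((h : ℤ) - 1)) - (m : TS R) * cc (δ A) * F m (h : ℤ))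
              * (Dh (F (n - m) ((g : ℤ) - 2 - (h : ℤ)))
                  - ((n - m : ℕ) : TS R) * cc (δ A) * F (n - m) ((g : ℤ) - 1 - (h : ℤ)))) :
    ∀ n : ℕ, 1 ≤ n → ∀ g : ℕ,
      ∃ q : Nat.Partition n → Polynomial R,
        (∀ π : Nat.Partition n, π.parts.card ≤ g + 1 →
            (q π).natDegree ≤ 3 * (g + 1 - π.parts.card))
        ∧ (∀ π : Nat.Partition n, g + 1 < π.parts.card → q π = 0)
        ∧ F n (g : ℤ)
            = ∑ π : Nat.Partition n,
                Tv ^ (π.parts.map fun i => i ^ 2).sum * Polynomial.C (q π) := by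
  have := algebraRat.charZero R
  have hDh : RaisesWeight Dh 2 := holomorphicDerivation_raisesWeight hDhC hDhS hDhT
  have ha : (2 : ℚ)⁻¹ • δ A ^ 2 ≠ 0 := smul_ne_zero (by norm_num) (pow_ne_zero 2 hA)
  have hmem : ∀ n, 1 ≤ n → ∀ g : ℕ, ∀ j : ℤ, j < g → F n j ∈ sector R n (3 * j + 3) := by
    intro n
    induction n using Nat.strong_induction_on with
    | _ n ihn =>
      intro hn g
      induction g with
      | zero => intro j hj; rw [hFneg n j (by omega)]; exact zero_mem _
      | succ g ihg =>
        intro j hj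
        obtain hj | rfl : j < g ∨ j = g := by omega
        · exact ihg j hj
        have hxy k := (coeff_propagatorDerivation_sub hDpC hDpS hDpT n (F n g) k).symm.trans
          (congrArg (coeff · k) (heq n hn g))
        obtain ⟨hy₂, hy₂n⟩ := quadraticTerm_mem_sector (δ := δ) (A := A) (g := g) hDh
          fun m hm hmn j => ihn m hmn hm (j.toNat + 1) j (by omega)
        exact mem_sector_of_coeff_eq hn (by omega) ha hxy
          (mem_sector_of_le (neg_sum_Dop_mem_sector hDh hp ihg)) hy₂ (by simpa using hy₂n)
  intro n hn g
  exact exists_sum_partitions_of_mem_sector (hmem n hn (g + 1) g (by omega))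

end
end

section
/- Let R be an integral domain which is also a ℚ-algebra, with a derivation δ : R → R; fix C, f, f̃, α ∈ R, q₁ := (1/2)·C·S + α ∈ R[S], and p_h ∈ R[S] (h ≥ 2) with deg p_h ≤ 3h−2. Fix κ ≥ 1 and A₁, …, A_κ ∈ R satisfying the genericity condition: for every nonzero symmetric κ×κ matrix d with integer entries, Σ_{α,β} d_{αβ}·(δA_α)·(δA_β) ≠ 0 in R. Let Q be the additive monoid of symmetric κ×κ matrices with entries in ℕ and let M be the monoid algebra of Q over R[S], with R[S]-basis {T^q}_{q∈Q} and T^q·T^{q'} = T^{q+q'}. Put w(q) := (1/2)·Σ_{α,β} q_{αβ}(δA_α)(δA_β) and v(q) := Σ_{α,β} q_{αβ}(δA_α)·δ(δA_β). Define derivations on M: ∂ with ∂ = 0 on R, ∂S = 1, ∂T^q = w(q)·T^q; and 𝔇 with 𝔇 = δ on R, 𝔇S = f − C·S², 𝔇T^q = (v(q)·S + w(q)·(f − C·S²))·T^q; set D²x := 𝔇(𝔇x) − (f̃ − C·S)·𝔇x. For nonzero n ∈ ℕ^κ write δA^{(n)} := Σ_α n_α·δA_α and n⊗n ∈ Q for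 the matrix (n_α n_β), and define operators on M: 𝒟^{(n)}_1 x := (1/2)·(δ(δA^{(n)}) − (f̃ − C·S)·δA^{(n)})·x + δA^{(n)}·(𝔇x + q₁·x); 𝒟^{(n)}_2 x := −(1/2)·D²x − q₁·𝔇x; 𝒟^{(n)}_{2h−1} x := δA^{(n)}·p_h·x and 𝒟^{(n)}_{2h} x := −p_h·𝔇x for h ≥ 2. Fix b : ℕ^κ∖{0} → ℤ with b(m) + b(m') ≥ b(m+m') for all nonzero m, m', and set B(n,m) := b(m) + b(n−m) − b(n) ≥ 0. Suppose (F^{(n)}_g) (n ∈ ℕ^κ∖{0}, g ≥ 0) is a family in M satisfying, for all n and g (with F^{(m)}_j := 0 for j < 0): (∂ − w(n⊗n)) F^{(n)}_g = − Σ_{h=1}^{g} 𝒟^{(n)}_h F^{(n)}_{g−h} + (1/2) Σ_{m+m'=n, m,m'≠0} Σ_{h=0}^{g−B(n,m)} (𝔇F^{(m)}_{h−1} − δA^{(m)}·F^{(m)}_h)·(𝔇F^{(m')}_{g−1−B(n,m)−h} − δA^{(m')}·F^{(m')}_{g−B(n,m)−h}). Then for every nonzero n and every g ≥ 0, F^{(n)}_g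 lies in the R-submodule Σ_{r ∈ P(n)} T^{A(r)} · { p ∈ R[S] : deg_S p ≤ 3·(g + b(n) − Σ_m r(m)·b(m)) }, the sum running over all vector partitions r of n, where A(r)_{αβ} := Σ_m r(m)·m_α·m_β, and summands with negative degree bound are zero. -/
open Polynomial

noncomputable section

/-- The additive monoid `Q` of symmetric `κ×κ` matrices with natural number entries. -/
def SymmMat (κ : ℕ) : AddSubmonoid (Matrix (Fin κ) (Fin κ) ℕ) where
  carrier := {A | A.IsSymm}
  add_mem' := fun ha hb => ha.add hb
  zero_mem' := Matrix.isSymm_zero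

/-- The ring `M`: the monoid algebra of `Q` over `R[S]`, with basis `{T^q}_{q ∈ Q}`
and `T^q·T^{q'} = T^{q+q'}`. -/
abbrev MAlg (R : Type*) [CommRing R] (κ : ℕ) : Type _ :=
  AddMonoidAlgebra (Polynomial R) (SymmMat κ)

/-- The basis element `T^q` of the monoid algebra. -/
def Tq {R : Type*} [CommRing R] {κ : ℕ} (q : SymmMat κ) : MAlg R κ :=
  AddMonoidAlgebra.single q 1

/-- The embedding `R[S] → M`. -/
def cP {R : Type*} [CommRing R] {κ : ℕ} (p : Polynomial R) : MAlg R κ :=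
  AddMonoidAlgebra.single 0 p

/-- The embedding `R → M`. -/
def cR {R : Type*} [CommRing R] {κ : ℕ} (r : R) : MAlg R κ :=
  AddMonoidAlgebra.single 0 (Polynomial.C r)

/-- The propagator `S` inside `M`. -/
def SP {R : Type*} [CommRing R] {κ : ℕ} : MAlg R κ :=
  AddMonoidAlgebra.single 0 Polynomial.X

/-- `w(q) = (1/2)·Σ_{α,β} q_{αβ}·(δA_α)·(δA_β)`. -/
def wgt {R : Type*} [CommRing R] [Algebra ℚ R] {κ : ℕ} (dA : Fin κ → R)
    (q : SymmMat κ) : R :=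
  (2 : ℚ)⁻¹ • ∑ α : Fin κ, ∑ β : Fin κ,
    (((q : Matrix (Fin κ) (Fin κ) ℕ) α β : R) * dA α * dA β)

/-- `v(q) = Σ_{α,β} q_{αβ}·(δA_α)·δ(δA_β)`. -/
def vgt {R : Type*} [CommRing R] {κ : ℕ} (dA dA2 : Fin κ → R) (q : SymmMat κ) : R :=
  ∑ α : Fin κ, ∑ β : Fin κ,
    (((q : Matrix (Fin κ) (Fin κ) ℕ) α β : R) * dA α * dA2 β)

/-- The symmetric matrix `n⊗n` with entries `n_α·n_β`. -/
def nTensor {κ : ℕ} (n : Fin κ → ℕ) : SymmMat κ :=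
  ⟨Matrix.of fun α β => n α * n β, by
    show Matrix.IsSymm _
    ext α β
    simp [Matrix.transpose_apply, Nat.mul_comm]⟩

/-- `δA^{(n)} = Σ_α n_α·δA_α`. -/
def dAn {R : Type*} [CommRing R] {κ : ℕ} (dA : Fin κ → R) (n : Fin κ → ℕ) : R :=
  ∑ α : Fin κ, (n α : R) * dA α

/-- The operators `𝒟^{(n)}_h` of the multi-parameter nonperturbative holomorphic anomaly
equations, with `q₁ = (1/2)cS + α` and `D²x = 𝔇(𝔇x) − (f̃ − cS)·𝔇x`. -/
def Dop4 {R : Type*} [CommRing R] [Algebra ℚ R] {κ : ℕ}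
    (dA dA2 : Fin κ → R) (c ft al : R) (p : ℕ → Polynomial R)
    (Dh : Derivation ℚ (MAlg R κ) (MAlg R κ)) (n : Fin κ → ℕ) (h : ℕ)
    (x : MAlg R κ) : MAlg R κ :=
  if h = 1 then
    (2 : ℚ)⁻¹ • ((cR (dAn dA2 n) - (cR ft - cR c * SP) * cR (dAn dA n)) * x)
      + cR (dAn dA n) * (Dh x + ((2 : ℚ)⁻¹ • (cR c * SP) + cR al) * x)
  else if h = 2 then
    -((2 : ℚ)⁻¹ • (Dh (Dh x) - (cR ft - cR c * SP) * Dh x))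
      - ((2 : ℚ)⁻¹ • (cR c * SP) + cR al) * Dh x
  else if h % 2 = 1 then
    cR (dAn dA n) * cP (p ((h + 1) / 2)) * x
  else
    -(cP (p (h / 2)) * Dh x)

/-- A vector partition of a nonzero `n ∈ ℕ^κ`. -/
def IsVPartition {κ : ℕ} (n : Fin κ → ℕ) (r : (Fin κ → ℕ) →₀ ℕ) : Prop :=
  r 0 = 0 ∧ r.sum (fun m k => k • m) = n

/-- The `A`-matrix of a vector partition: `A(r) = Σ_m r(m)·(m⊗m)`, i.e.
`A(r)_{αβ} = Σ_m r(m)·m_α·m_β`, as an element of `Q`. -/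
def AMatS {κ : ℕ} (r : (Fin κ → ℕ) →₀ ℕ) : SymmMat κ :=
  r.sum fun m k => k • nTensor m

/-!
Induct on `n` in the product order of `ℕ^κ`, then on `g`. In the basis `T^q` the operator
`∂ − w(n⊗n)` acts on the coefficient of `T^q` as `p ↦ p' + (w(q) − w(n⊗n))·p`. Genericity makes
`w` injective, so off the diagonal `q ≠ n⊗n` this map preserves degree bounds, while on the
diagonal it is differentiation, which lowers the degree by exactly one. It therefore suffices that
the right-hand side of the anomaly equation has the claimed shape with its `T^{n⊗n}` coefficient one
degree lower. The linear terms lose a degree since `𝔇` raises the `S`-degree by at most two and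
`deg p_h ≤ 3h − 2`. The quadratic terms are products over partitions `r` of `m` and `r'` of `n − m`,
and `A(r + r') ≠ n⊗n`: with the coordinate sums `s(m) = Σ_α m_α`, the equality
`Σ r(m) s(m)² = (Σ r(m) s(m))²` read off from `A(r) = n⊗n` forces `r` to have a single part.
-/

theorem Finsupp.exists_eq_single_one_of_sum_mul_sq {ι : Type*} {r : ι →₀ ℕ} {s : ι → ℕ}
    (hr : r ≠ 0) (hs : ∀ i ∈ r.support, 0 < s i)
    (h : (r.sum fun i k => k * s i ^ 2) = (r.sum fun i k => k * s i) ^ 2) :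
    ∃ i, r = Finsupp.single i 1 := by
  classical
  -- `s i ≤ T` gives `Σ r s² ≤ T · Σ r s = T²`; equality forces `s = T` on the support,
  -- hence `Σ r = 1`.
  set T := r.sum fun i k => k * s i with hT
  have hle : ∀ i ∈ r.support, s i ≤ T := fun i hi =>
    (Nat.le_mul_of_pos_left _ (Nat.pos_of_ne_zero (Finsupp.mem_support_iff.1 hi))).trans
      (Finset.single_le_sum (f := fun i => r i * s i) (fun _ _ => Nat.zero_le _) hi)
  have hsum : ∑ i ∈ r.support, r i * s i ^ 2 = ∑ i ∈ r.support, r i * s i * T := by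
    rw [← Finset.sum_mul]; exact h.trans (sq T)
  have heq := (Finset.sum_eq_sum_iff_of_le fun i hi => by
    rw [sq, ← mul_assoc]; exact Nat.mul_le_mul_left _ (hle i hi)).1 hsum
  have hsT : ∀ i ∈ r.support, s i = T := fun i hi => by
    have := heq i hi
    rw [sq, ← mul_assoc] at this
    exact Nat.eq_of_mul_eq_mul_left
      (Nat.mul_pos (Nat.pos_of_ne_zero (Finsupp.mem_support_iff.1 hi)) (hs i hi)) this
  obtain ⟨a, ha⟩ := Finsupp.support_nonempty_iff.2 hr
  have hTpos : 0 < T := hsT a ha ▸ hs a ha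
  have hmass : (r.sum fun _ k => k) * T = 1 * T := by
    rw [one_mul]
    conv_rhs => rw [hT]
    simp only [Finsupp.sum, Finset.sum_mul]
    exact Finset.sum_congr rfl fun i hi => by rw [hsT i hi]
  obtain ⟨i, hi⟩ := Multiset.card_eq_one.1
    ((Finsupp.card_toMultiset r).trans (Nat.eq_of_mul_eq_mul_right hTpos hmass))
  refine ⟨i, Finsupp.ext fun j => ?_⟩
  rw [← Finsupp.count_toMultiset, hi, Multiset.count_singleton, Finsupp.single_apply]
  simp only [eq_comm]

section VectorPartitions

variable {κ : ℕ}

theorem IsVPartition.add {m m' : Fin κ → ℕ} {r r' : (Fin κ → ℕ) →₀ ℕ} (hr : IsVPartition m r)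
    (hr' : IsVPartition m' r') : IsVPartition (m + m') (r + r') := by
  refine ⟨by rw [Finsupp.add_apply, hr.1, hr'.1], ?_⟩
  rw [Finsupp.sum_add_index' (fun a => zero_smul ℕ a) fun a b c => add_smul b c a, hr.2, hr'.2]

theorem isVPartition_single {n : Fin κ → ℕ} (hn : n ≠ 0) : IsVPartition n (Finsupp.single n 1) :=
  ⟨Finsupp.single_eq_of_ne hn.symm, by simp⟩

theorem AMatS_add (r r' : (Fin κ → ℕ) →₀ ℕ) : AMatS (r + r') = AMatS r + AMatS r' :=
  Finsupp.sum_add_index' (fun a => zero_smul ℕ (nTensor a)) fun a b c => add_smul b c (nTensor a)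

theorem AMatS_single (n : Fin κ → ℕ) : AMatS (Finsupp.single n 1) = nTensor n := by
  simp [AMatS]

theorem IsVPartition.ne_zero {n : Fin κ → ℕ} {r : (Fin κ → ℕ) →₀ ℕ} (hr : IsVPartition n r)
    (hn : n ≠ 0) : r ≠ 0 := by
  rintro rfl
  exact hn (by rw [← hr.2, Finsupp.sum_zero_index])

theorem IsVPartition.sum_mul_sum_apply {n : Fin κ → ℕ} {r : (Fin κ → ℕ) →₀ ℕ}
    (hr : IsVPartition n r) : (r.sum fun m k => k * ∑ α, m α) = ∑ α, n α := by
  rw [← hr.2]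
  simp only [Finsupp.sum, Finset.sum_apply, Pi.smul_apply, smul_eq_mul, Finset.mul_sum]
  exact Finset.sum_comm

theorem sum_sum_AMatS_apply (r : (Fin κ → ℕ) →₀ ℕ) :
    ∑ α, ∑ β, (AMatS r : Matrix (Fin κ) (Fin κ) ℕ) α β = r.sum fun m k => k * (∑ α, m α) ^ 2 := by
  rw [AMatS, ← AddSubmonoid.coe_subtype, map_finsuppSum]
  simp only [Finsupp.sum, map_nsmul, AddSubmonoid.coe_subtype, Matrix.sum_apply,
    Matrix.smul_apply, smul_eq_mul, nTensor, Matrix.of_apply, sq, Finset.sum_mul_sum]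
  simp only [Finset.mul_sum]
  symm
  rw [Finset.sum_comm]
  exact Finset.sum_congr rfl fun α _ => Finset.sum_comm

theorem IsVPartition.eq_single_of_AMatS_eq {n : Fin κ → ℕ} (hn : n ≠ 0)
    {r : (Fin κ → ℕ) →₀ ℕ} (hr : IsVPartition n r) (hA : AMatS r = nTensor n) :
    r = Finsupp.single n 1 := by
  have hpos : ∀ m ∈ r.support, 0 < ∑ α, m α := by
    refine fun m hm => Nat.pos_of_ne_zero fun h => ?_
    have : m = 0 := funext fun α => Finset.sum_eq_zero_iff.1 h α (Finset.mem_univ α)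
    exact Finsupp.mem_support_iff.1 hm (this ▸ hr.1)
  have hsq : (r.sum fun m k => k * (∑ α, m α) ^ 2) = (r.sum fun m k => k * ∑ α, m α) ^ 2 := by
    rw [← sum_sum_AMatS_apply, hA, ← AMatS_single, sum_sum_AMatS_apply, hr.sum_mul_sum_apply,
      Finsupp.sum_single_index (zero_mul _), one_mul]
  obtain ⟨m, rfl⟩ := Finsupp.exists_eq_single_one_of_sum_mul_sq (hr.ne_zero hn) hpos hsq
  rw [show m = n by simpa using hr.2]

theorem AMatS_add_ne_nTensor {m m' : Fin κ → ℕ} {r r' : (Fin κ → ℕ) →₀ ℕ} (hm : m ≠ 0)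
    (hm' : m' ≠ 0) (hr : IsVPartition m r) (hr' : IsVPartition m' r') :
    AMatS (r + r') ≠ nTensor (m + m') := by
  intro hA
  have hmm' : m + m' ≠ 0 := fun h =>
    hm (funext fun α => (Nat.add_eq_zero_iff.1 (congrFun h α)).1)
  have h := congrArg Finsupp.degree ((hr.add hr').eq_single_of_AMatS_eq hmm' hA)
  rw [map_add, Finsupp.degree_single] at h
  have := (Finsupp.degree_eq_zero_iff r).not.2 (hr.ne_zero hm)
  have := (Finsupp.degree_eq_zero_iff r').not.2 (hr'.ne_zero hm')
  omega

end VectorPartitions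

namespace Polynomial

variable {R : Type*} [Semiring R]

/-- Polynomials of degree at most `N`; a negative bound admits only `0`. -/
def degreeLEInt (R : Type*) [Semiring R] (N : ℤ) : Submodule R R[X] :=
  degreeLT R (N + 1).toNat

theorem mem_degreeLEInt {N : ℤ} {p : R[X]} :
    p ∈ degreeLEInt R N ↔ p = 0 ∨ (p.natDegree : ℤ) ≤ N := by
  rw [degreeLEInt, mem_degreeLT]
  rcases eq_or_ne p 0 with rfl | hp
  · simp
  rw [degree_eq_natDegree hp, Nat.cast_lt]
  simp only [hp, false_or]
  omega

theorem mem_degreeLEInt_of_natDegree_le {N : ℤ} {p : R[X]} (h : (p.natDegree : ℤ) ≤ N) :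
    p ∈ degreeLEInt R N :=
  mem_degreeLEInt.2 (Or.inr h)

theorem degreeLEInt_mono {N N' : ℤ} (h : N ≤ N') : degreeLEInt R N ≤ degreeLEInt R N' :=
  degreeLT_mono (by omega)

theorem mem_degreeLEInt_of_neg {N : ℤ} (hN : N < 0) {p : R[X]} :
    p ∈ degreeLEInt R N ↔ p = 0 := by
  rw [mem_degreeLEInt]
  exact or_iff_left (by omega)

theorem mul_mem_degreeLEInt {N N' : ℤ} {p q : R[X]} (hp : p ∈ degreeLEInt R N)
    (hq : q ∈ degreeLEInt R N') : p * q ∈ degreeLEInt R (N + N') := by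
  rcases mem_degreeLEInt.1 hp with rfl | hp
  · simp
  rcases mem_degreeLEInt.1 hq with rfl | hq
  · simp
  exact mem_degreeLEInt_of_natDegree_le (by have := natDegree_mul_le (p := p) (q := q); omega)

theorem degree_derivative_add_C_mul [NoZeroDivisors R] {c : R} (hc : c ≠ 0) (p : R[X]) :
    (derivative p + C c * p).degree = p.degree := by
  rcases eq_or_ne p 0 with rfl | hp
  · simp
  rw [degree_add_eq_right_of_degree_lt, degree_C_mul hc]
  rw [degree_C_mul hc]
  exact degree_derivative_lt hp

theorem derivative_add_C_mul_mem_degreeLEInt_iff [NoZeroDivisors R] {c : R} (hc : c ≠ 0)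
    {N : ℤ} {p : R[X]} :
    derivative p + C c * p ∈ degreeLEInt R N ↔ p ∈ degreeLEInt R N := by
  rw [degreeLEInt, mem_degreeLT, mem_degreeLT, degree_derivative_add_C_mul hc]

theorem mem_degreeLEInt_of_derivative_mem [IsAddTorsionFree R] {N : ℤ} (hN : 0 ≤ N)
    {p : R[X]} (h : derivative p ∈ degreeLEInt R (N - 1)) : p ∈ degreeLEInt R N := by
  rcases eq_or_ne p.natDegree 0 with h0 | h0
  · exact mem_degreeLEInt_of_natDegree_le (by omega)
  have hdeg := degree_derivative h0
  rcases mem_degreeLEInt.1 h with h' | h'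
  · simp [h'] at hdeg
  rw [natDegree_eq_of_degree_eq_some hdeg] at h'
  exact mem_degreeLEInt_of_natDegree_le (by omega)

end Polynomial

section Pieces

variable {R : Type*} [CommRing R] {κ : ℕ}

def piece (q : SymmMat κ) (N : ℤ) : Submodule R (MAlg R κ) :=
  (degreeLEInt R N).map (AddMonoidAlgebra.lsingle q)

theorem mem_piece {q : SymmMat κ} {N : ℤ} {x : MAlg R κ} :
    x ∈ piece q N ↔ ∃ p ∈ degreeLEInt R N, AddMonoidAlgebra.single q p = x :=
  Iff.rfl

theorem single_mem_piece {q : SymmMat κ} {N : ℤ} {p : R[X]} (hp : p ∈ degreeLEInt R N) :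
    AddMonoidAlgebra.single q p ∈ piece q N :=
  ⟨p, hp, rfl⟩

theorem piece_mono {q : SymmMat κ} {N N' : ℤ} (h : N ≤ N') :
    piece (R := R) q N ≤ piece q N' :=
  Submodule.map_mono (degreeLEInt_mono h)

theorem mul_mem_piece {q q' q'' : SymmMat κ} {N N' N'' : ℤ} {x y : MAlg R κ}
    (hx : x ∈ piece q N) (hy : y ∈ piece q' N') (hq : q + q' = q'') (hN : N + N' ≤ N'') :
    x * y ∈ piece q'' N'' := by
  obtain ⟨p, hp, rfl⟩ := mem_piece.1 hx
  obtain ⟨p', hp', rfl⟩ := mem_piece.1 hy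
  rw [AddMonoidAlgebra.single_mul_single, hq]
  exact piece_mono hN (single_mem_piece (mul_mem_degreeLEInt hp hp'))

theorem cR_mem_piece (a : R) : (cR a : MAlg R κ) ∈ piece 0 0 :=
  single_mem_piece (mem_degreeLEInt_of_natDegree_le (by simp))

theorem SP_pow_mem_piece (i : ℕ) : (SP : MAlg R κ) ^ i ∈ piece 0 i := by
  rw [SP, AddMonoidAlgebra.single_pow, smul_zero]
  exact single_mem_piece (mem_degreeLEInt_of_natDegree_le (by exact_mod_cast natDegree_X_pow_le i))

theorem SP_mem_piece : (SP : MAlg R κ) ∈ piece 0 1 := by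
  simpa using SP_pow_mem_piece (R := R) (κ := κ) 1

theorem Tq_mem_piece (q : SymmMat κ) : (Tq q : MAlg R κ) ∈ piece q 0 :=
  single_mem_piece (mem_degreeLEInt_of_natDegree_le (by simp))

theorem cP_mem_piece (p : R[X]) : (cP p : MAlg R κ) ∈ piece 0 p.natDegree :=
  single_mem_piece (mem_degreeLEInt_of_natDegree_le le_rfl)

theorem single_C_mul_X_pow (q : SymmMat κ) (a : R) (i : ℕ) :
    (AddMonoidAlgebra.single q (C a * X ^ i) : MAlg R κ) = cR a * SP ^ i * Tq q := by
  rw [cR, SP, Tq, AddMonoidAlgebra.single_pow, AddMonoidAlgebra.single_mul_single,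
    AddMonoidAlgebra.single_mul_single]
  simp

theorem cR_eq_algebraMap (a : R) : (cR a : MAlg R κ) = algebraMap R (MAlg R κ) a := rfl

theorem cP_C_mul_X_pow (a : R) (i : ℕ) : (cP (C a * X ^ i) : MAlg R κ) = cR a * SP ^ i := by
  rw [cP, single_C_mul_X_pow, Tq, ← AddMonoidAlgebra.one_def, mul_one]

theorem map_mem_piece_of_forall_monomial {F : Type*} [FunLike F (MAlg R κ) (MAlg R κ)]
    [AddMonoidHomClass F (MAlg R κ) (MAlg R κ)] (D : F) {q : SymmMat κ} {d : ℤ}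
    (hD : ∀ (a : R) (i : ℕ), D (cR a * SP ^ i * Tq q) ∈ piece q (i + d)) {N : ℤ}
    {x : MAlg R κ} (hx : x ∈ piece q N) : D x ∈ piece q (N + d) := by
  obtain ⟨p, hp, rfl⟩ := mem_piece.1 hx
  rcases mem_degreeLEInt.1 hp with rfl | hp
  · simp
  rw [p.as_sum_range_C_mul_X_pow, ← AddMonoidAlgebra.singleAddHom_apply, map_sum, map_sum]
  refine Submodule.sum_mem _ fun i hi => ?_
  rw [AddMonoidAlgebra.singleAddHom_apply, single_C_mul_X_pow]
  have : (i : ℤ) ≤ p.natDegree := by have := Finset.mem_range.1 hi; omega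
  exact piece_mono (by omega) (hD _ i)

end Pieces

section Derivations

variable {R : Type*} [CommRing R] [Algebra ℚ R] {κ : ℕ}

structure RaisesDegreeByTwo (D : Derivation ℚ (MAlg R κ) (MAlg R κ)) : Prop where
  map_cR : ∀ a : R, D (cR a) ∈ piece 0 0
  map_SP : D SP ∈ piece 0 2
  map_Tq : ∀ q, D (Tq q) ∈ piece q 2

theorem raisesDegreeByTwo_of_eq {D : Derivation ℚ (MAlg R κ) (MAlg R κ)} {δ : R → R}
    {V W : SymmMat κ → R} {f c : R} (hR : ∀ a : R, D (cR a) = cR (δ a))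
    (hS : D SP = cR f - cR c * SP ^ 2)
    (hT : ∀ q, D (Tq q) = (cR (V q) * SP + cR (W q) * (cR f - cR c * SP ^ 2)) * Tq q) :
    RaisesDegreeByTwo D := by
  have hfc : (cR f - cR c * SP ^ 2 : MAlg R κ) ∈ piece 0 2 :=
    sub_mem (piece_mono (by norm_num) (cR_mem_piece f))
      (mul_mem_piece (cR_mem_piece c) (SP_pow_mem_piece 2) (zero_add 0) (by norm_num))
  refine ⟨fun a => hR a ▸ cR_mem_piece _, hS ▸ hfc, fun q => (hT q).symm ▸ ?_⟩
  refine mul_mem_piece (N := 2) (add_mem ?_ ?_) (Tq_mem_piece q) (zero_add q) (by norm_num)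
  · exact mul_mem_piece (cR_mem_piece _) SP_mem_piece (zero_add 0) (by norm_num)
  · exact mul_mem_piece (cR_mem_piece _) hfc (zero_add 0) (by norm_num)

namespace RaisesDegreeByTwo

variable {D : Derivation ℚ (MAlg R κ) (MAlg R κ)}

theorem map_mem_piece (hD : RaisesDegreeByTwo D) {q : SymmMat κ} {N : ℤ} {x : MAlg R κ}
    (hx : x ∈ piece q N) : D x ∈ piece q (N + 2) := by
  refine map_mem_piece_of_forall_monomial D (fun a i => ?_) hx
  rw [Derivation.leibniz, Derivation.leibniz, Derivation.leibniz_pow]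
  simp only [smul_eq_mul]
  have haS : (cR a * SP ^ i : MAlg R κ) ∈ piece 0 i :=
    mul_mem_piece (cR_mem_piece a) (SP_pow_mem_piece i) (zero_add 0) (zero_add _).le
  have hDS : (SP : MAlg R κ) ^ (i - 1) * D SP ∈ piece 0 (i + 2) :=
    mul_mem_piece (SP_pow_mem_piece _) hD.map_SP (zero_add 0) (by omega)
  have hDaS : cR a * (i • (SP ^ (i - 1) * D SP)) + SP ^ i * D (cR a) ∈ piece 0 (i + 2) :=
    add_mem (mul_mem_piece (cR_mem_piece a) (nsmul_mem hDS i) (zero_add 0) (by omega))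
      (mul_mem_piece (SP_pow_mem_piece i) (hD.map_cR a) (zero_add 0) (by omega))
  exact add_mem (mul_mem_piece haS (hD.map_Tq q) (zero_add q) le_rfl)
    (mul_mem_piece (Tq_mem_piece q) hDaS (add_zero q) (by omega))

end RaisesDegreeByTwo

end Derivations

section PartitionSpan

variable {R : Type*} [CommRing R] {κ : ℕ}

def partitionSpan (n : Fin κ → ℕ) (N : ((Fin κ → ℕ) →₀ ℕ) → ℤ) : Submodule R (MAlg R κ) :=
  ⨆ r : {r // IsVPartition n r}, piece (AMatS r.1) (N r.1)

variable {n : Fin κ → ℕ} {N N' : ((Fin κ → ℕ) →₀ ℕ) → ℤ}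

theorem piece_le_partitionSpan {r : (Fin κ → ℕ) →₀ ℕ} (hr : IsVPartition n r) {M : ℤ}
    (hM : M ≤ N r) : piece (AMatS r) M ≤ partitionSpan (R := R) n N :=
  (piece_mono hM).trans (le_iSup (fun r : {r // IsVPartition n r} => piece (AMatS r.1) (N r.1))
    ⟨r, hr⟩)

theorem partitionSpan_mono (h : ∀ r, N r ≤ N' r) :
    partitionSpan (R := R) n N ≤ partitionSpan n N' :=
  iSup_le fun r => piece_le_partitionSpan r.2 (h r.1)

@[elab_as_elim]
theorem partitionSpan_induction {motive : MAlg R κ → Prop} {x : MAlg R κ}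
    (hx : x ∈ partitionSpan n N)
    (mem : ∀ r, IsVPartition n r → ∀ x ∈ piece (AMatS r) (N r), motive x) (zero : motive 0)
    (add : ∀ x y, motive x → motive y → motive (x + y)) : motive x :=
  Submodule.iSup_induction _ (motive := motive) hx (fun r => mem r.1 r.2) zero add

theorem mul_mem_partitionSpan_of_mem_piece {a x : MAlg R κ} {d : ℤ} (ha : a ∈ piece 0 d)
    (hx : x ∈ partitionSpan n N) (h : ∀ r, N r + d ≤ N' r) : a * x ∈ partitionSpan n N' := by
  refine partitionSpan_induction hx (fun r hr x hx => ?_) (by simp) fun x y hx hy => ?_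
  · exact piece_le_partitionSpan hr le_rfl
      (mul_mem_piece ha hx (zero_add _) ((add_comm _ _).trans_le (h r)))
  · rw [mul_add]; exact add_mem hx hy

theorem mul_mem_partitionSpan {m m' : Fin κ → ℕ} {N'' : ((Fin κ → ℕ) →₀ ℕ) → ℤ}
    {x y : MAlg R κ} (hx : x ∈ partitionSpan m N) (hy : y ∈ partitionSpan m' N')
    (h : ∀ r r', IsVPartition m r → IsVPartition m' r' → N r + N' r' ≤ N'' (r + r')) :
    x * y ∈ partitionSpan (m + m') N'' := by
  refine partitionSpan_induction hx (fun r hr x hx => ?_) (by simp) fun x x' hx hx' => ?_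
  · refine partitionSpan_induction hy (fun r' hr' y hy => ?_) (by simp) fun y y' hy hy' => ?_
    · exact piece_le_partitionSpan (hr.add hr') (h r r' hr hr')
        (mul_mem_piece hx hy (AMatS_add r r').symm le_rfl)
    · rw [mul_add]; exact add_mem hy hy'
  · rw [add_mul]; exact add_mem hx hx'

theorem mem_partitionSpan_iff {x : MAlg R κ} :
    x ∈ partitionSpan n N ↔ ∀ q, x.coeff q = 0 ∨
      ∃ r, IsVPartition n r ∧ AMatS r = q ∧ x.coeff q ∈ degreeLEInt R (N r) := by
  refine ⟨fun hx => ?_, fun hx => ?_⟩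
  · refine partitionSpan_induction hx (fun r hr x hx => ?_) (fun q => Or.inl rfl)
      fun x y hx hy q => ?_
    · obtain ⟨p, hp, rfl⟩ := mem_piece.1 hx
      intro q
      rw [AddMonoidAlgebra.coeff_single, Finsupp.single_apply]
      split_ifs with hq
      · exact Or.inr ⟨r, hr, hq, hp⟩
      · exact Or.inl rfl
    · rw [AddMonoidAlgebra.coeff_add, Finsupp.add_apply]
      rcases hx q with hx | ⟨r, hr, hq, hx⟩ <;> rcases hy q with hy | ⟨r', hr', hq', hy⟩
      · exact Or.inl (by rw [hx, hy, add_zero])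
      · exact Or.inr ⟨r', hr', hq', by rwa [hx, zero_add]⟩
      · exact Or.inr ⟨r, hr, hq, by rwa [hy, add_zero]⟩
      · rcases le_total (N r) (N r') with hle | hle
        · exact Or.inr ⟨r', hr', hq', add_mem (degreeLEInt_mono hle hx) hy⟩
        · exact Or.inr ⟨r, hr, hq, add_mem hx (degreeLEInt_mono hle hy)⟩
  · rw [← AddMonoidAlgebra.sum_coeff_single x]
    refine Submodule.finsuppSum_mem _ _ _ _ fun q _ => ?_
    rcases hx q with h0 | ⟨r, hr, rfl, hp⟩
    · simp [h0]
    · exact piece_le_partitionSpan hr le_rfl (single_mem_piece hp)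

theorem RaisesDegreeByTwo.map_mem_partitionSpan [Algebra ℚ R]
    {D : Derivation ℚ (MAlg R κ) (MAlg R κ)} (hD : RaisesDegreeByTwo D) {x : MAlg R κ}
    (hx : x ∈ partitionSpan n N) (h : ∀ r, N r + 2 ≤ N' r) : D x ∈ partitionSpan n N' := by
  refine partitionSpan_induction hx (fun r hr x hx => ?_) (by simp) fun x y hx hy => ?_
  · exact piece_le_partitionSpan hr (h r) (hD.map_mem_piece hx)
  · rw [map_add]; exact add_mem hx hy

theorem partitionSpan_le_span :
    partitionSpan n N ≤ Submodule.span R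
      {x : MAlg R κ | ∃ (r : (Fin κ → ℕ) →₀ ℕ) (q : R[X]), IsVPartition n r ∧
        x = Tq (AMatS r) * cP q ∧ (N r < 0 → q = 0) ∧ (0 ≤ N r → (q.natDegree : ℤ) ≤ N r)} := by
  refine iSup_le fun r x hx => ?_
  obtain ⟨q, hq, rfl⟩ := mem_piece.1 hx
  refine Submodule.subset_span ⟨r.1, q, r.2, ?_, fun hN => (mem_degreeLEInt_of_neg hN).1 hq,
    fun hN => ?_⟩
  · rw [Tq, cP, AddMonoidAlgebra.single_mul_single, add_zero, one_mul]
  · rcases mem_degreeLEInt.1 hq with rfl | hq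
    · simpa using hN
    · exact hq

end PartitionSpan

section Weights

variable {R : Type*} [CommRing R] [Algebra ℚ R] {κ : ℕ}

theorem wgt_injective {dA : Fin κ → R}
    (h : ∀ d : Matrix (Fin κ) (Fin κ) ℤ, d.IsSymm → d ≠ 0 →
      (∑ α : Fin κ, ∑ β : Fin κ, (d α β : R) * dA α * dA β) ≠ 0) :
    Function.Injective (wgt dA) := by
  intro q q' hqq
  by_contra hne
  let d : Matrix (Fin κ) (Fin κ) ℤ :=
    (q : Matrix (Fin κ) (Fin κ) ℕ).map (↑) - (q' : Matrix (Fin κ) (Fin κ) ℕ).map (↑)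
  have hd : d ≠ 0 := fun h0 => hne <| Subtype.ext <| Matrix.ext fun α β => by
    simpa [d, sub_eq_zero] using congrFun (congrFun h0 α) β
  refine h d ((q.2.map _).sub (q'.2.map _)) hd ?_
  have h2 := congrArg ((2 : ℚ) • ·) hqq
  simp only [wgt, smul_smul, mul_inv_cancel₀ (two_ne_zero' ℚ), one_smul] at h2
  simp only [d, Matrix.sub_apply, Matrix.map_apply, Int.cast_sub, Int.cast_natCast, sub_mul,
    Finset.sum_sub_distrib, h2, sub_self]

end Weights

section ComponentODE

variable {R : Type*} [CommRing R] [Algebra ℚ R] {κ : ℕ}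
  {D : Derivation ℚ (MAlg R κ) (MAlg R κ)} {W : SymmMat κ → R}

theorem Derivation.map_cP (hR : ∀ a : R, D (cR a) = 0) (hS : D SP = 1) (p : R[X]) :
    D (cP p) = cP (derivative p) := by
  induction p using Polynomial.induction_on' with
  | add p q hp hq =>
    simp only [cP, AddMonoidAlgebra.single_add, map_add] at hp hq ⊢
    rw [hp, hq]
  | monomial i a =>
    rw [← C_mul_X_pow_eq_monomial, cP_C_mul_X_pow, derivative_C_mul_X_pow, cP_C_mul_X_pow,
      Derivation.leibniz, Derivation.leibniz_pow, hR, hS]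
    simp only [smul_eq_mul, nsmul_eq_mul, mul_one, mul_zero, add_zero, cR_eq_algebraMap,
      map_mul, _root_.map_natCast]
    ring

theorem Derivation.map_single (hR : ∀ a : R, D (cR a) = 0) (hS : D SP = 1)
    (hT : ∀ q, D (Tq q) = cR (W q) * Tq q) (q : SymmMat κ) (p : R[X]) :
    D (AddMonoidAlgebra.single q p) = AddMonoidAlgebra.single q (derivative p + C (W q) * p) := by
  have hsingle : ∀ p' : R[X], (AddMonoidAlgebra.single q p' : MAlg R κ) = cP p' * Tq q :=
    fun p' => by rw [cP, Tq, AddMonoidAlgebra.single_mul_single, zero_add, mul_one]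
  have hcP : ∀ p' : R[X], (cP p' : MAlg R κ) = AddMonoidAlgebra.singleZeroRingHom p' :=
    fun _ => rfl
  rw [hsingle, hsingle, Derivation.leibniz, hT, Derivation.map_cP hR hS, smul_eq_mul, smul_eq_mul,
    show (cR (W q) : MAlg R κ) = cP (C (W q)) from rfl]
  simp only [hcP, map_add, map_mul]
  ring

theorem coeff_Derivation (hR : ∀ a : R, D (cR a) = 0) (hS : D SP = 1)
    (hT : ∀ q, D (Tq q) = cR (W q) * Tq q) (x : MAlg R κ) (q : SymmMat κ) :
    (D x).coeff q = derivative (x.coeff q) + C (W q) * x.coeff q := by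
  induction x using AddMonoidAlgebra.induction_linear with
  | zero => simp
  | add x y hx hy =>
    simp only [map_add, AddMonoidAlgebra.coeff_add, Finsupp.add_apply, hx, hy]
    ring
  | single q' p =>
    rw [Derivation.map_single hR hS hT]
    simp only [AddMonoidAlgebra.coeff_single, Finsupp.single_apply]
    split_ifs with h
    · rw [h]
    · simp

theorem mem_partitionSpan_of_sub_mem [IsDomain R] [IsAddTorsionFree R]
    (hR : ∀ a : R, D (cR a) = 0) (hS : D SP = 1) (hT : ∀ q, D (Tq q) = cR (W q) * Tq q)
    (hW : Function.Injective W) {n : Fin κ → ℕ} (hn : n ≠ 0)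
    {N : ((Fin κ → ℕ) →₀ ℕ) → ℤ} (hN : 0 ≤ N (Finsupp.single n 1)) {x : MAlg R κ}
    (hx : D x - cR (W (nTensor n)) * x ∈
      partitionSpan n fun r => N r - if AMatS r = nTensor n then 1 else 0) :
    x ∈ partitionSpan n N := by
  rw [mem_partitionSpan_iff] at hx ⊢
  intro q
  have hode : (D x - cR (W (nTensor n)) * x).coeff q
      = derivative (x.coeff q) + C (W q - W (nTensor n)) * x.coeff q := by
    rw [AddMonoidAlgebra.coeff_sub, Finsupp.sub_apply, coeff_Derivation hR hS hT, cR,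
      AddMonoidAlgebra.coeff_single_zero_mul, map_sub]
    ring
  rcases eq_or_ne q (nTensor n) with rfl | hq
  · refine Or.inr ⟨_, isVPartition_single hn, AMatS_single n,
      mem_degreeLEInt_of_derivative_mem hN ?_⟩
    rw [sub_self, map_zero, zero_mul, add_zero] at hode
    rcases hode ▸ hx (nTensor n) with h0 | ⟨r, hr, hA, hy⟩
    · rw [h0]; exact zero_mem _
    · rwa [hr.eq_single_of_AMatS_eq hn hA, if_pos (AMatS_single n)] at hy
  · have hc : W q - W (nTensor n) ≠ 0 := sub_ne_zero.2 (hW.ne hq)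
    rcases hode ▸ hx q with h0 | ⟨r, hr, rfl, hy⟩
    · refine Or.inl ((mem_degreeLEInt_of_neg (N := -1) (by norm_num)).1 ?_)
      rw [← derivative_add_C_mul_mem_degreeLEInt_iff hc, h0]
      exact zero_mem _
    · rw [if_neg hq, sub_zero, derivative_add_C_mul_mem_degreeLEInt_iff hc] at hy
      exact Or.inr ⟨r, hr, rfl, hy⟩

end ComponentODE

section DegreeBound

variable {κ : ℕ}

def degreeBound (b : (Fin κ → ℕ) → ℤ) (n : Fin κ → ℕ) (g : ℤ) (r : (Fin κ → ℕ) →₀ ℕ) :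
    ℤ :=
  3 * (g + b n - r.sum fun m k => (k : ℤ) * b m)

theorem degreeBound_single (b : (Fin κ → ℕ) → ℤ) (n : Fin κ → ℕ) (g : ℤ) :
    degreeBound b n g (Finsupp.single n 1) = 3 * g := by
  simp [degreeBound]

theorem degreeBound_add (b : (Fin κ → ℕ) → ℤ) {m m' n : Fin κ → ℕ} {G G' g : ℤ}
    (hg : G + G' + (b m + b m' - b n) = g) (r r' : (Fin κ → ℕ) →₀ ℕ) :
    degreeBound b m G r + degreeBound b m' G' r' = degreeBound b n g (r + r') := by
  simp only [degreeBound]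
  rw [Finsupp.sum_add_index' (fun _ => by simp) fun _ _ _ => by push_cast; ring]
  linarith

end DegreeBound

theorem lt_and_tsub_lt_of_le {ι : Type*} {m n : ι → ℕ} (hmn : m ≤ n) (hm : m ≠ 0)
    (hmn' : m ≠ n) : m < n ∧ n - m < n ∧ n - m ≠ 0 :=
  ⟨lt_of_le_of_ne hmn hmn',
    lt_of_le_of_ne tsub_le_self fun h => hm (by simpa using (tsub_eq_iff_eq_add_of_le hmn).1 h),
    fun h => hmn' (le_antisymm hmn (tsub_eq_zero_iff_le.1 h))⟩

section AnomalyOperators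

variable {R : Type*} [CommRing R] [Algebra ℚ R] {κ : ℕ}
  {D : Derivation ℚ (MAlg R κ) (MAlg R κ)} {n : Fin κ → ℕ} {N N' : ((Fin κ → ℕ) →₀ ℕ) → ℤ}
  {x : MAlg R κ}

theorem Dop4_mem_partitionSpan {dA dA2 : Fin κ → R} {c ft al : R} {p : ℕ → R[X]}
    (hp : ∀ k, 2 ≤ k → (p k).natDegree ≤ 3 * k - 2) (hD : RaisesDegreeByTwo D) {h : ℕ}
    (hh : 1 ≤ h) (hx : x ∈ partitionSpan n N) (hN : ∀ r, N r + 3 * h ≤ N' r + 1) :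
    Dop4 dA dA2 c ft al p D n h x ∈ partitionSpan n N' := by
  have hcR : ∀ a : R, (cR a : MAlg R κ) ∈ piece 0 1 :=
    fun a => piece_mono zero_le_one (cR_mem_piece a)
  have hcS : (cR c * SP : MAlg R κ) ∈ piece 0 1 :=
    mul_mem_piece (cR_mem_piece c) SP_mem_piece (zero_add 0) (by norm_num)
  have hq₁ : ((2 : ℚ)⁻¹ • (cR c * SP) + cR al : MAlg R κ) ∈ piece 0 1 :=
    add_mem (Submodule.smul_of_tower_mem _ _ hcS) (hcR al)
  have hft : (cR ft - cR c * SP : MAlg R κ) ∈ piece 0 1 := sub_mem (hcR ft) hcS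
  have hDx := hD.map_mem_partitionSpan hx (N' := fun r => N r + 2) fun _ => le_rfl
  rw [Dop4]
  split_ifs with h1 h2 hodd
  · subst h1
    have hmul : (cR (dAn dA2 n) - (cR ft - cR c * SP) * cR (dAn dA n) : MAlg R κ) ∈ piece 0 1 :=
      sub_mem (hcR _) (mul_mem_piece hft (cR_mem_piece _) (add_zero 0) le_rfl)
    refine add_mem (Submodule.smul_of_tower_mem _ _
      (mul_mem_partitionSpan_of_mem_piece hmul hx fun r => ?_))
      (mul_mem_partitionSpan_of_mem_piece (N := N') (cR_mem_piece _)
        (add_mem (partitionSpan_mono (fun r => ?_) hDx)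
          (mul_mem_partitionSpan_of_mem_piece hq₁ hx fun r => ?_)) fun r => by simp)
    all_goals have := hN r; omega
  · subst h2
    refine sub_mem (neg_mem (Submodule.smul_of_tower_mem _ _
      (sub_mem (hD.map_mem_partitionSpan hDx fun r => ?_)
        (mul_mem_partitionSpan_of_mem_piece hft hDx fun r => ?_))))
      (mul_mem_partitionSpan_of_mem_piece hq₁ hDx fun r => ?_)
    all_goals have := hN r; omega
  · have hpk := hp ((h + 1) / 2) (by omega)
    rw [mul_assoc]
    refine mul_mem_partitionSpan_of_mem_piece (cR_mem_piece _)
      (mul_mem_partitionSpan_of_mem_piece (cP_mem_piece _) hx fun r => le_rfl) fun r => ?_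
    have := hN r
    omega
  · have hpk := hp (h / 2) (by omega)
    refine neg_mem (mul_mem_partitionSpan_of_mem_piece (cP_mem_piece _) hDx fun r => ?_)
    have := hN r
    omega

theorem sub_cR_mul_mem_partitionSpan (hD : RaisesDegreeByTwo D) {x₀ : MAlg R κ}
    (hx : x ∈ partitionSpan n fun r => N r - 3) (hx₀ : x₀ ∈ partitionSpan n N) (a : R) :
    D x - cR a * x₀ ∈ partitionSpan n N :=
  sub_mem (hD.map_mem_partitionSpan hx fun r => by linarith)
    (mul_mem_partitionSpan_of_mem_piece (cR_mem_piece a) hx₀ fun r => by simp)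

theorem quadratic_term_mem (hD : RaisesDegreeByTwo D) {b : (Fin κ → ℕ) → ℤ}
    {F : (Fin κ → ℕ) → ℤ → MAlg R κ} {m m' : Fin κ → ℕ} (hm : m ≠ 0)
    (hm' : m' ≠ 0) (hn : m + m' = n) (hF : ∀ G, F m G ∈ partitionSpan m (degreeBound b m G))
    (hF' : ∀ G, F m' G ∈ partitionSpan m' (degreeBound b m' G)) (a a' : R) (g h : ℤ) :
    (D (F m (h - 1)) - cR a * F m h)
        * (D (F m' (g - 1 - (b m + b m' - b n) - h)) - cR a' * F m' (g - (b m + b m' - b n) - h))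
      ∈ partitionSpan n fun r => degreeBound b n g r - if AMatS r = nTensor n then 1 else 0 := by
  subst hn
  refine mul_mem_partitionSpan
    (sub_cR_mul_mem_partitionSpan hD (partitionSpan_mono (fun r => ?_) (hF (h - 1))) (hF h) a)
    (sub_cR_mul_mem_partitionSpan hD (partitionSpan_mono (fun r => ?_) (hF' _)) (hF' _) a')
    fun r r' hr hr' => ?_
  · simp only [degreeBound]; omega
  · simp only [degreeBound]; omega
  · rw [if_neg (AMatS_add_ne_nTensor hm hm' hr hr'), sub_zero]
    exact (degreeBound_add b (by ring) r r').le

end AnomalyOperators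

theorem multi_parameter_structure_general
    {R : Type*} [CommRing R] [IsDomain R] [Algebra ℚ R] {κ : ℕ}
    (δ : Derivation ℚ R R) (c f ft al : R) (A : Fin κ → R)
    (hgen : ∀ d : Matrix (Fin κ) (Fin κ) ℤ, d.IsSymm → d ≠ 0 →
      (∑ α : Fin κ, ∑ β : Fin κ, (d α β : R) * δ (A α) * δ (A β)) ≠ 0)
    (p : ℕ → Polynomial R) (hp : ∀ h : ℕ, 2 ≤ h → (p h).natDegree ≤ 3 * h - 2)
    (Dp Dh : Derivation ℚ (MAlg R κ) (MAlg R κ))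
    (hDpR : ∀ r : R, Dp (cR r) = 0)
    (hDpS : Dp (SP (R := R) (κ := κ)) = 1)
    (hDpT : ∀ q : SymmMat κ, Dp (Tq (R := R) q) = cR (wgt (fun α => δ (A α)) q) * Tq q)
    (hDhR : ∀ r : R, Dh (cR r) = cR (δ r))
    (hDhS : Dh (SP (R := R) (κ := κ)) = cR f - cR c * SP ^ 2)
    (hDhT : ∀ q : SymmMat κ, Dh (Tq (R := R) q)
      = (cR (vgt (fun α => δ (A α)) (fun β => δ (δ (A β))) q) * SP
          + cR (wgt (fun α => δ (A α)) q) * (cR f - cR c * SP ^ 2)) * Tq q)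
    (b : (Fin κ → ℕ) → ℤ)
    (F : (Fin κ → ℕ) → ℤ → MAlg R κ)
    (hFneg : ∀ (n : Fin κ → ℕ) (j : ℤ), j < 0 → F n j = 0)
    (heq : ∀ n : Fin κ → ℕ, n ≠ 0 → ∀ g : ℕ,
      Dp (F n (g : ℤ)) - cR (wgt (fun α => δ (A α)) (nTensor n)) * F n (g : ℤ)
        = -(∑ h ∈ Finset.Icc 1 g,
              Dop4 (fun α => δ (A α)) (fun β => δ (δ (A β))) c ft al p Dh n h
                (F n ((g : ℤ) - (h : ℤ))))
          + (2 : ℚ)⁻¹ •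
            ∑ m ∈ (Finset.Iic n).filter (fun m => m ≠ 0 ∧ m ≠ n),
              ∑ h ∈ Finset.Icc (0 : ℤ) ((g : ℤ) - (b m + b (n - m) - b n)),
                (Dh (F m (h - 1)) - cR (dAn (fun α => δ (A α)) m) * F m h)
                * (Dh (F (n - m) ((g : ℤ) - 1 - (b m + b (n - m) - b n) - h))
                    - cR (dAn (fun α => δ (A α)) (n - m))
                        * F (n - m) ((g : ℤ) - (b m + b (n - m) - b n) - h))) :
    ∀ n : Fin κ → ℕ, n ≠ 0 → ∀ g : ℕ,
      F n (g : ℤ) ∈ Submodule.span R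
        {x : MAlg R κ | ∃ (r : (Fin κ → ℕ) →₀ ℕ) (q : Polynomial R),
          IsVPartition n r ∧
          x = Tq (AMatS r) * cP q ∧
          (3 * ((g : ℤ) + b n - r.sum fun m k => (k : ℤ) * b m) < 0 → q = 0) ∧
          (0 ≤ 3 * ((g : ℤ) + b n - r.sum fun m k => (k : ℤ) * b m) →
            (q.natDegree : ℤ) ≤ 3 * ((g : ℤ) + b n - r.sum fun m k => (k : ℤ) * b m))} := by
  have : IsAddTorsionFree R := IsAddTorsionFree.of_module_rat R
  have hD := raisesDegreeByTwo_of_eq hDhR hDhS hDhT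
  have hW := wgt_injective hgen
  suffices key : ∀ n, n ≠ 0 → ∀ G : ℤ, F n G ∈ partitionSpan n (degreeBound b n G) from
    fun n hn g => partitionSpan_le_span (key n hn g)
  intro n
  induction n using WellFoundedLT.induction with
  | _ n ihn =>
  intro hn G
  rcases lt_or_ge G 0 with hG | hG
  · rw [hFneg n G hG]
    exact zero_mem _
  lift G to ℕ using hG
  induction G using Nat.strong_induction_on with
  | _ g ihg =>
  refine mem_partitionSpan_of_sub_mem hDpR hDpS hDpT hW hn (by simp [degreeBound_single]) ?_
  rw [heq n hn g]
  refine add_mem (neg_mem (Submodule.sum_mem _ fun h hh => ?_)) (Submodule.smul_of_tower_mem _ _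
    (Submodule.sum_mem _ fun m hm => Submodule.sum_mem _ fun h _ => ?_))
  · obtain ⟨h1, hg⟩ := Finset.mem_Icc.1 hh
    have hF : F n (g - h) ∈ partitionSpan n (degreeBound b n (g - h)) := by
      simpa [Nat.cast_sub hg] using ihg (g - h) (by omega)
    refine Dop4_mem_partitionSpan hp hD h1 hF fun r => ?_
    simp only [degreeBound]
    split_ifs <;> omega
  · obtain ⟨hmn, hm0, hmn'⟩ : m ≤ n ∧ m ≠ 0 ∧ m ≠ n := by simpa using hm
    obtain ⟨hlt, hlt', hnm0⟩ := lt_and_tsub_lt_of_le hmn hm0 hmn'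
    exact quadratic_term_mem hD hm0 hnm0 (add_tsub_cancel_of_le hmn) (ihn m hlt hm0)
      (ihn _ hlt' hnm0) _ _ _ _

/-- Structure theorem for multi-parameter transseries solutions of the holomorphic
anomaly equations: every nonperturbative free energy `F^{(n)}_g` lies in the
`R`-submodule `Σ_{r ∈ P(n)} T^{A(r)}·{p ∈ R[S] : deg p ≤ 3(g + b(n) − Σ_m r(m)b(m))}`,
summands with a negative degree bound being zero. -/
theorem multi_parameter_structure
    {R : Type*} [CommRing R] [IsDomain R] [Algebra ℚ R] {κ : ℕ} (hκ : 1 ≤ κ)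
    (δ : Derivation ℚ R R) (c f ft al : R) (A : Fin κ → R)
    (hgen : ∀ d : Matrix (Fin κ) (Fin κ) ℤ, d.IsSymm → d ≠ 0 →
      (∑ α : Fin κ, ∑ β : Fin κ, (d α β : R) * δ (A α) * δ (A β)) ≠ 0)
    (p : ℕ → Polynomial R) (hp : ∀ h : ℕ, 2 ≤ h → (p h).natDegree ≤ 3 * h - 2)
    (Dp Dh : Derivation ℚ (MAlg R κ) (MAlg R κ))
    (hDpR : ∀ r : R, Dp (cR r) = 0)
    (hDpS : Dp (SP (R := R) (κ := κ)) = 1)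
    (hDpT : ∀ q : SymmMat κ, Dp (Tq (R := R) q) = cR (wgt (fun α => δ (A α)) q) * Tq q)
    (hDhR : ∀ r : R, Dh (cR r) = cR (δ r))
    (hDhS : Dh (SP (R := R) (κ := κ)) = cR f - cR c * SP ^ 2)
    (hDhT : ∀ q : SymmMat κ, Dh (Tq (R := R) q)
      = (cR (vgt (fun α => δ (A α)) (fun β => δ (δ (A β))) q) * SP
          + cR (wgt (fun α => δ (A α)) q) * (cR f - cR c * SP ^ 2)) * Tq q)
    (b : (Fin κ → ℕ) → ℤ)
    (hb : ∀ m m' : Fin κ → ℕ, m ≠ 0 → m' ≠ 0 → b (m + m') ≤ b m + b m')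
    (F : (Fin κ → ℕ) → ℤ → MAlg R κ)
    (hFneg : ∀ (n : Fin κ → ℕ) (j : ℤ), j < 0 → F n j = 0)
    (heq : ∀ n : Fin κ → ℕ, n ≠ 0 → ∀ g : ℕ,
      Dp (F n (g : ℤ)) - cR (wgt (fun α => δ (A α)) (nTensor n)) * F n (g : ℤ)
        = -(∑ h ∈ Finset.Icc 1 g,
              Dop4 (fun α => δ (A α)) (fun β => δ (δ (A β))) c ft al p Dh n h
                (F n ((g : ℤ) - (h : ℤ))))
          + (2 : ℚ)⁻¹ •
            ∑ m ∈ (Finset.Iic n).filter (fun m => m ≠ 0 ∧ m ≠ n),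
              ∑ h ∈ Finset.Icc (0 : ℤ) ((g : ℤ) - (b m + b (n - m) - b n)),
                (Dh (F m (h - 1)) - cR (dAn (fun α => δ (A α)) m) * F m h)
                * (Dh (F (n - m) ((g : ℤ) - 1 - (b m + b (n - m) - b n) - h))
                    - cR (dAn (fun α => δ (A α)) (n - m))
                        * F (n - m) ((g : ℤ) - (b m + b (n - m) - b n) - h))) :
    ∀ n : Fin κ → ℕ, n ≠ 0 → ∀ g : ℕ,
      F n (g : ℤ) ∈ Submodule.span R
        {x : MAlg R κ | ∃ (r : (Fin κ → ℕ) →₀ ℕ) (q : Polynomial R),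
          IsVPartition n r ∧
          x = Tq (AMatS r) * cP q ∧
          (3 * ((g : ℤ) + b n - r.sum fun m k => (k : ℤ) * b m) < 0 → q = 0) ∧
          (0 ≤ 3 * ((g : ℤ) + b n - r.sum fun m k => (k : ℤ) * b m) →
            (q.natDegree : ℤ) ≤ 3 * ((g : ℤ) + b n - r.sum fun m k => (k : ℤ) * b m))} :=
  multi_parameter_structure_general δ c f ft al A hgen p hp Dp Dh hDpR hDpS hDpT hDhR hDhS hDhT b F
    hFneg heq

end
end

section
/- In the transseries model described in the context, fix n ≥ 1 and let (y_g)_{g≥0} be a sequence in M = R[S,T] satisfying the homogeneous equations (∂ − (1/2)n²(δA)²) y_g = − Σ_{h=1}^{g} 𝒟^{(n)}_h y_{g−h} for every g ≥ 0. If ev₀(y_g) = 0 for every g, where ev₀ : R[S,T] → R[T] is the R[T]-algebra evaluation map sending S to 0 (setting the propagator to zero, i.e. extracting the holomorphic ambiguity part), then y_g = 0 for every g. -/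
open Polynomial

noncomputable section

/-!
Every operator `𝒟^{(n)}_h` is linear, so by strong induction on `g` all lower orders vanish
and the equation at order `g` becomes the eigenvalue equation `∂ y = ½ n² (δA)² y`. Writing
`y = Σ_k a_k(S) Tᵏ`, and using `∂ Tᵏ = ½ k (δA)² Tᵏ`, this is the linear ODE
`a_k' = ½ (n² - k) (δA)² a_k` in `S` for each `k`. Over a `ℚ`-algebra the coefficients of a
polynomial solution of `a' = r a` are determined recursively from `a(0)`, which is the
holomorphic ambiguity and vanishes by assumption.
-/

theorem Polynomial.eq_zero_of_derivative_eq_C_mul_s5 {A : Type*} [CommRing A] [Algebra ℚ A]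
    {a : A[X]} {r : A} (hder : derivative a = C r * a) (h0 : a.coeff 0 = 0) : a = 0 := by
  ext j
  induction j with
  | zero => simpa using h0
  | succ j ih =>
    have hrec : a.coeff (j + 1) * ((j + 1 : ℕ) : A) = r * a.coeff j := by
      rw [Nat.cast_succ, ← coeff_derivative, hder, coeff_C_mul]
    have hunit : IsUnit ((j + 1 : ℕ) : A) := by
      rw [← map_natCast (algebraMap ℚ A)]
      exact (IsUnit.mk0 _ (by positivity)).map _
    rw [coeff_zero] at ih ⊢
    rw [ih, mul_zero] at hrec
    exact hunit.mul_left_eq_zero.mp hrec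

namespace Derivation

section

variable {A : Type*} [CommRing A] [Algebra ℚ A] (D : Derivation ℚ A[X] A[X]) {e : A}

theorem apply_X_pow_of_apply_X (hX : D X = C e * X) (m : ℕ) :
    D (X ^ m) = C (m * e) * X ^ m := by
  induction m with
  | zero => simp
  | succ m ih =>
    rw [pow_succ, D.leibniz, ih, hX, smul_eq_mul, smul_eq_mul]
    push_cast
    simp only [map_add, map_mul, map_one]
    ring

theorem coeff_apply_of_apply_C_of_apply_X (d : A →+ A) (hC : ∀ a, D (C a) = C (d a))
    (hX : D X = C e * X) (x : A[X]) (k : ℕ) :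
    (D x).coeff k = d (x.coeff k) + k * e * x.coeff k := by
  induction x using Polynomial.induction_on' with
  | add u v hu hv => simp only [map_add, coeff_add, hu, hv]; ring
  | monomial m a =>
    rw [← C_mul_X_pow_eq_monomial, D.leibniz, hC, D.apply_X_pow_of_apply_X hX, smul_eq_mul,
      smul_eq_mul, ← mul_assoc, ← C_mul, mul_comm (X ^ m), coeff_add, coeff_C_mul_X_pow,
      coeff_C_mul_X_pow, coeff_C_mul_X_pow]
    by_cases hkm : k = m
    · subst hkm
      simp only [if_true]
      ring
    · simp [hkm]

end

variable {R : Type*} [CommRing R] [Algebra ℚ R] (D : Derivation ℚ R[X][X] R[X][X])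

theorem apply_C_eq_C_derivative (hC : ∀ r, D (C (C r)) = 0) (hS : D (C X) = 1) (a : R[X]) :
    D (C a) = C (derivative a) := by
  induction a using Polynomial.induction_on' with
  | add u v hu hv => simp only [map_add, hu, hv]
  | monomial m r =>
    rw [← C_mul_X_pow_eq_monomial, derivative_C_mul_X_pow, C_mul, C_mul, map_pow, D.leibniz,
      D.leibniz_pow, hC, hS]
    simp only [smul_eq_mul, mul_one, nsmul_eq_mul, map_mul, C_eq_natCast, map_pow]
    ring

theorem eq_zero_of_apply_eq_C_mul_of_map_eval_zero (hC : ∀ a, D (C a) = C (derivative a))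
    {e μ : R} (hX : D X = C (C e) * X) {y : R[X][X]} (hy : D y = C (C μ) * y)
    (h0 : y.map (evalRingHom 0) = 0) : y = 0 := by
  ext k : 1
  rw [coeff_zero]
  refine eq_zero_of_derivative_eq_C_mul_s5 (r := μ - k * e) ?_ ?_
  · have hk := D.coeff_apply_of_apply_C_of_apply_X derivative.toAddMonoidHom hC hX y k
    rw [hy, coeff_C_mul, LinearMap.toAddMonoidHom_coe] at hk
    rw [map_sub, map_mul, C_eq_natCast]
    linear_combination -hk
  · simpa [coeff_zero_eq_eval_zero] using congrArg (coeff · k) h0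

end Derivation

theorem Dop_apply_zero {R : Type*} [CommRing R] [Algebra ℚ R] (δ : Derivation ℚ R R)
    (c ft al A : R) (p : ℕ → Polynomial R) (Dh : Derivation ℚ (TS R) (TS R)) (n h : ℕ) :
    Dop δ c ft al A p Dh n h 0 = 0 := by
  unfold Dop
  split_ifs <;> simp

theorem homogeneous_solution_vanishes_general
    {R : Type*} [CommRing R] [Algebra ℚ R]
    (δ : Derivation ℚ R R) (c ft al A : R)
    (p : ℕ → Polynomial R)
    (Dp Dh : Derivation ℚ (TS R) (TS R))
    (hDpC : ∀ r : R, Dp (cc r) = 0)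
    (hDpS : Dp (Sv (R := R)) = 1)
    (hDpT : Dp (Tv (R := R)) = (2 : ℚ)⁻¹ • (cc (δ A) ^ 2 * Tv))
    (n : ℕ) (y : ℕ → TS R)
    (heq : ∀ g : ℕ,
      Dp (y g) - (2 : ℚ)⁻¹ • ((n : TS R) ^ 2 * cc (δ A) ^ 2 * y g)
        = -(∑ h ∈ Finset.Icc 1 g, Dop δ c ft al A p Dh n h (y (g - h))))
    (hev : ∀ g : ℕ, (y g).map (Polynomial.evalRingHom (0 : R)) = 0) :
    ∀ g : ℕ, y g = 0 := by
  have hDpX : Dp X = C (C ((2 : ℚ)⁻¹ • δ A ^ 2)) * X := by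
    rw [← smul_C, ← smul_C, smul_mul_assoc]
    simpa [cc, Tv] using hDpT
  intro g
  induction g using Nat.strong_induction_on with
  | _ g ih =>
    have hlower : ∑ h ∈ Finset.Icc 1 g, Dop δ c ft al A p Dh n h (y (g - h)) = 0 :=
      Finset.sum_eq_zero fun h hh => by
        rw [ih (g - h) (by grind), Dop_apply_zero]
    have hy : Dp (y g) = C (C ((2 : ℚ)⁻¹ • ((n : R) ^ 2 * δ A ^ 2))) * y g := by
      have hg := heq g
      rw [hlower, neg_zero, sub_eq_zero] at hg
      rw [hg, ← smul_mul_assoc, ← smul_C, ← smul_C]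
      simp [cc]
    exact Dp.eq_zero_of_apply_eq_C_mul_of_map_eval_zero
      (Dp.apply_C_eq_C_derivative hDpC hDpS) hDpX hy (hev g)

/-- Kernel lemma for the nonperturbative holomorphic anomaly operator: a formal solution
`(y_g)` of the homogeneous equations `(∂ − (1/2)n²(δA)²) y_g = −Σ_{h=1}^g 𝒟^{(n)}_h y_{g−h}`
whose holomorphic ambiguity part (the propagator `S` set to zero) vanishes at every order,
is identically zero. -/
theorem homogeneous_solution_vanishes
    {R : Type*} [CommRing R] [IsDomain R] [Algebra ℚ R]
    (δ : Derivation ℚ R R) (c f ft al A : R) (hA : δ A ≠ 0)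
    (p : ℕ → Polynomial R) (hp : ∀ h : ℕ, 2 ≤ h → (p h).natDegree ≤ 3 * h - 2)
    (Dp Dh : Derivation ℚ (TS R) (TS R))
    (hDpC : ∀ r : R, Dp (cc r) = 0)
    (hDpS : Dp (Sv (R := R)) = 1)
    (hDpT : Dp (Tv (R := R)) = (2 : ℚ)⁻¹ • (cc (δ A) ^ 2 * Tv))
    (hDhC : ∀ r : R, Dh (cc r) = cc (δ r))
    (hDhS : Dh (Sv (R := R)) = cc f - cc c * Sv ^ 2)
    (hDhT : Dh (Tv (R := R)) = (cc (δ A) * cc (δ (δ A)) * Sv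
        + (2 : ℚ)⁻¹ • (cc (δ A) ^ 2 * (cc f - cc c * Sv ^ 2))) * Tv)
    (n : ℕ) (hn : 1 ≤ n) (y : ℕ → TS R)
    (heq : ∀ g : ℕ,
      Dp (y g) - (2 : ℚ)⁻¹ • ((n : TS R) ^ 2 * cc (δ A) ^ 2 * y g)
        = -(∑ h ∈ Finset.Icc 1 g, Dop δ c ft al A p Dh n h (y (g - h))))
    (hev : ∀ g : ℕ, (y g).map (Polynomial.evalRingHom (0 : R)) = 0) :
    ∀ g : ℕ, y g = 0 :=
  homogeneous_solution_vanishes_general δ c ft al A p Dp Dh hDpC hDpS hDpT n y heq hev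
end
end

section
/- In the two-parameter resonant transseries model described in the context, suppose the family (F^{(n)}_g) satisfies the equations, and let ε : ℕ² → {1, −1} be a homomorphism of additive-to-multiplicative monoids (ε(m + m') = ε(m)·ε(m') for all m, m'). Assume the holomorphic ambiguities respect the symmetry: ev₀(F^{(n₁,n₂)}_g) = ε(n)·(−1)^{g+1}·ev₀(F^{(n₂,n₁)}_g) for every sector n = (n₁,n₂) and every g ≥ 0. Then F^{(n₁,n₂)}_g = ε(n)·(−1)^{g+1}·F^{(n₂,n₁)}_g for every sector n and every g ≥ 0; equivalently, the sector series F^{(n)}(g_s) = Σ_{g≥0} g_s^{g+1} F^{(n)}_g satisfy F^{(n)}(−g_s) = ε(n)·F^{(n*)}(g_s), where n* := (n₂,n₁). -/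
open Polynomial

noncomputable section

/-- `n̄ = n₁ − n₂`, so that the total instanton action of the sector `n = (n₁,n₂)`
is `n̄·A` (the actions being `A₁ = A`, `A₂ = −A`). -/
def nbar (n : ℕ × ℕ) : ℤ := (n.1 : ℤ) - (n.2 : ℤ)

/-- The operators `𝒟^{(n)}_h` of the nonperturbative holomorphic anomaly equations in the
two-parameter resonant model, for the sector with `n̄ = nb`. -/
def Dop2 {R : Type*} [CommRing R] [Algebra ℚ R] (δ : Derivation ℚ R R)
    (c ft al A : R) (p : ℕ → Polynomial R) (Dh : Derivation ℚ (TS R) (TS R))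
    (nb : ℤ) (h : ℕ) (x : TS R) : TS R :=
  if h = 1 then
    (2 : ℚ)⁻¹ • ((nb : TS R) * (cc (δ (δ A)) - (cc ft - cc c * Sv) * cc (δ A)) * x)
      + (nb : TS R) * cc (δ A) * (Dh x + ((2 : ℚ)⁻¹ • (cc c * Sv) + cc al) * x)
  else if h = 2 then
    -((2 : ℚ)⁻¹ • (Dh (Dh x) - (cc ft - cc c * Sv) * Dh x))
      - ((2 : ℚ)⁻¹ • (cc c * Sv) + cc al) * Dh x
  else if h % 2 = 1 then
    (nb : TS R) * cc (δ A) * Polynomial.C (p ((h + 1) / 2)) * x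
  else
    -(Polynomial.C (p (h / 2)) * Dh x)


/-! The equation for `F^{(n)}_g` has the form `(∂ - ½ n̄² (δA)²) F^{(n)}_g = RHS`, where the right-hand
side only involves `F^{(m)}_j` with `j < g`. Under `n ↦ n*` the action `n̄` changes sign, so
`𝒟^{(n)}_h` picks up `(-1)^h`, while `ε(m) ε(n - m) = ε(n)` takes care of the quadratic terms.
By strong induction on `g`, the right-hand side for `n` is therefore `ε(n) (-1)^(g+1)` times the
one for `n*`, so `x = F^{(n)}_g - ε(n) (-1)^(g+1) F^{(n*)}_g` satisfies `∂x = ½ n̄² (δA)² x`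
and, by the assumption on holomorphic ambiguities, vanishes at `S = 0`. Writing
`x = ∑_b q_b(S) T^b` and using `∂T = ½ (δA)² T`, this says `q_b' = ½ (n̄² - b) (δA)² q_b` with
`q_b(0) = 0`, and comparing Taylor coefficients gives `q_b = 0`. -/

theorem Polynomial.eq_zero_of_derivative_eq_C_mul_s6 {R : Type*} [Semiring R] [IsAddTorsionFree R]
    {q : R[X]} {c : R} (hq : derivative q = C c * q) (h0 : q.eval 0 = 0) : q = 0 := by
  ext i
  induction i with
  | zero => rwa [coeff_zero_eq_eval_zero]
  | succ i ih =>
    have h := congrArg (coeff · i) hq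
    simp only [coeff_derivative, coeff_C_mul, ih, mul_zero, coeff_zero] at h ⊢
    rw [← Nat.cast_succ, ← nsmul_eq_mul'] at h
    exact nsmul_right_injective i.succ_ne_zero (h.trans (nsmul_zero _).symm)

section Derivation

variable {R : Type*} [CommRing R] [Algebra ℚ R] {D : Derivation ℚ (TS R) (TS R)} {a : R}

theorem derivation_apply_C (hC : ∀ r : R, D (cc r) = 0) (hS : D Sv = 1) (q : R[X]) :
    D (C q) = C (derivative q) := by
  induction q using Polynomial.induction_on' with
  | add p q hp hq => simp [hp, hq]
  | monomial i r =>
    rw [← C_mul_X_pow_eq_monomial, map_mul, map_pow, Derivation.leibniz, Derivation.leibniz_pow]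
    simp only [cc, Sv] at hC hS
    simp [hC, hS, derivative_X_pow]

theorem derivation_apply_monomial (hC : ∀ r : R, D (cc r) = 0) (hS : D Sv = 1)
    (hT : D Tv = cc a * Tv) (b : ℕ) (q : R[X]) :
    D (monomial b q) = monomial b (derivative q + C (b * a) * q) := by
  rw [← C_mul_X_pow_eq_monomial, Derivation.leibniz, derivation_apply_C hC hS,
    Derivation.leibniz_pow, show (X : TS R) = Tv from rfl, hT, ← C_mul_X_pow_eq_monomial]
  cases b with
  | zero => simp
  | succ b => simp [cc, Tv, smul_eq_mul, pow_succ]; ring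

theorem coeff_derivation_apply (hC : ∀ r : R, D (cc r) = 0) (hS : D Sv = 1)
    (hT : D Tv = cc a * Tv) (x : TS R) (b : ℕ) :
    (D x).coeff b = derivative (x.coeff b) + C (b * a) * x.coeff b := by
  induction x using Polynomial.induction_on' with
  | add x y hx hy => simp only [map_add, coeff_add, hx, hy, mul_add]; abel
  | monomial i q =>
    rw [derivation_apply_monomial hC hS hT, coeff_monomial, coeff_monomial]
    split_ifs with hib
    · rw [hib]
    · simp

theorem eq_zero_of_derivation_apply_eq_cc_mul (hC : ∀ r : R, D (cc r) = 0) (hS : D Sv = 1)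
    (hT : D Tv = cc a * Tv) {k : R} {x : TS R} (hx : D x = cc k * x)
    (h0 : x.map (evalRingHom 0) = 0) : x = 0 := by
  have := IsAddTorsionFree.of_module_rat R
  ext1 b
  refine eq_zero_of_derivative_eq_C_mul_s6 (c := k - b * a) ?_ ?_
  · have h := congrArg (coeff · b) hx
    simp only [coeff_derivation_apply hC hS hT, cc, coeff_C_mul] at h
    rw [map_sub, sub_mul, ← h]
    ring
  · simpa using congrArg (coeff · b) h0

end Derivation

theorem nbar_swap (n : ℕ × ℕ) : nbar n.swap = -nbar n := by
  simp only [nbar, Prod.fst_swap, Prod.snd_swap]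
  ring

section SectorSymmetric

variable {R : Type*} [CommRing R]

def SectorSymmetricAt (ε : ℕ × ℕ → ℤ) (F : ℕ × ℕ → ℤ → TS R) (j : ℤ) : Prop :=
  ∀ m : ℕ × ℕ, m ≠ 0 → F m j = (ε m * ((j + 1).negOnePow : ℤ)) • F m.swap j

theorem sectorSymmetricAt_of_forall_lt {ε : ℕ × ℕ → ℤ} {F : ℕ × ℕ → ℤ → TS R} {g : ℕ}
    (hFneg : ∀ (n : ℕ × ℕ) (j : ℤ), j < 0 → F n j = 0)
    (hlt : ∀ k < g, SectorSymmetricAt ε F k) : ∀ j : ℤ, j < g → SectorSymmetricAt ε F j := by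
  intro j hj m hm
  rcases lt_or_ge j 0 with hneg | hnonneg
  · simp [hFneg _ _ hneg]
  · lift j to ℕ using hnonneg
    exact hlt j (by omega) m hm

end SectorSymmetric

section SwapSymmetry

variable {R : Type*} [CommRing R] [Algebra ℚ R]

theorem Dop2_zsmul (δ : Derivation ℚ R R) (c ft al A : R) (p : ℕ → R[X])
    (Dh : Derivation ℚ (TS R) (TS R)) (nb : ℤ) (h : ℕ) (t : ℤ) (x : TS R) :
    Dop2 δ c ft al A p Dh nb h (t • x) = t • Dop2 δ c ft al A p Dh nb h x := by
  have hD (y : TS R) : Dh (t * y) = t * Dh y := by rw [← zsmul_eq_mul, map_zsmul, zsmul_eq_mul]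
  unfold Dop2
  split_ifs <;> simp only [zsmul_eq_mul, hD, Algebra.smul_def (R := ℚ)] <;> ring

theorem Dop2_neg (δ : Derivation ℚ R R) (c ft al A : R) (p : ℕ → R[X])
    (Dh : Derivation ℚ (TS R) (TS R)) (nb : ℤ) (h : ℕ) (x : TS R) :
    Dop2 δ c ft al A p Dh (-nb) h x = (-1) ^ h • Dop2 δ c ft al A p Dh nb h x := by
  unfold Dop2
  split_ifs with h1 h2 h3
  · subst h1
    simp only [Algebra.smul_def]
    push_cast
    ring
  · subst h2
    norm_num
  · rw [(Nat.odd_iff.mpr h3).neg_one_pow]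
    simp only [zsmul_eq_mul]
    push_cast
    ring
  · rw [(Nat.even_iff.mpr (by omega)).neg_one_pow, one_smul]

def quadraticSource (Dh : Derivation ℚ (TS R) (TS R)) (a : R) (F : ℕ × ℕ → ℤ → TS R)
    (n : ℕ × ℕ) (g : ℕ) : TS R :=
  ∑ m ∈ (Finset.range (n.1 + 1) ×ˢ Finset.range (n.2 + 1)).filter (fun m => m ≠ 0 ∧ m ≠ n),
    ∑ h ∈ Finset.range g,
      (Dh (F m ((h : ℤ) - 1)) - (nbar m : TS R) * cc a * F m (h : ℤ))
      * (Dh (F (n - m) ((g : ℤ) - 2 - (h : ℤ)))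
          - (nbar (n - m) : TS R) * cc a * F (n - m) ((g : ℤ) - 1 - (h : ℤ)))

variable {ε : ℕ × ℕ → ℤ} {F : ℕ × ℕ → ℤ → TS R} {g : ℕ}

theorem sum_Dop2_swap (δ : Derivation ℚ R R) (c ft al A : R) (p : ℕ → R[X])
    (Dh : Derivation ℚ (TS R) (TS R)) (hsym : ∀ j : ℤ, j < g → SectorSymmetricAt ε F j)
    {n : ℕ × ℕ} (hn : n ≠ 0) :
    ∑ h ∈ Finset.Icc 1 g, Dop2 δ c ft al A p Dh (nbar n) h (F n (g - h))
      = (ε n * ((g + 1 : ℤ).negOnePow : ℤ)) •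
          ∑ h ∈ Finset.Icc 1 g, Dop2 δ c ft al A p Dh (nbar n.swap) h (F n.swap (g - h)) := by
  rw [Finset.smul_sum]
  refine Finset.sum_congr rfl fun h hh => ?_
  have h1 : 1 ≤ h := (Finset.mem_Icc.1 hh).1
  have hnb : nbar n = -nbar n.swap := by rw [nbar_swap, neg_neg]
  rw [hsym (g - h) (by omega) n hn, Dop2_zsmul, hnb, Dop2_neg, smul_smul, mul_assoc,
    ← Int.coe_negOnePow_natCast, ← Units.val_mul, ← Int.negOnePow_add,
    show (g : ℤ) - h + 1 + h = g + 1 by ring]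

theorem sectorBlock_swap (Dh : Derivation ℚ (TS R) (TS R)) (a : R)
    (hsym : ∀ j : ℤ, j < g → SectorSymmetricAt ε F j) {m : ℕ × ℕ} (hm : m ≠ 0) {j : ℤ}
    (hj : j < g) :
    Dh (F m (j - 1)) - (nbar m : TS R) * cc a * F m j
      = (ε m * (j.negOnePow : ℤ)) •
          (Dh (F m.swap (j - 1)) - (nbar m.swap : TS R) * cc a * F m.swap j) := by
  rw [hsym (j - 1) (by omega) m hm, hsym j hj m hm, map_zsmul, sub_add_cancel,
    Int.negOnePow_succ, nbar_swap]
  simp only [zsmul_eq_mul, Units.val_neg]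
  push_cast
  ring

theorem mem_sectorPairs_swap {n m : ℕ × ℕ} :
    m.swap ∈ (Finset.range (n.2 + 1) ×ˢ Finset.range (n.1 + 1)).filter
        (fun m => m ≠ 0 ∧ m ≠ n.swap)
      ↔ m ∈ (Finset.range (n.1 + 1) ×ˢ Finset.range (n.2 + 1)).filter
        (fun m => m ≠ 0 ∧ m ≠ n) := by
  simp only [Finset.mem_filter, Finset.mem_product, Prod.fst_swap, Prod.snd_swap, ne_eq,
    Prod.swap_eq_iff_eq_swap, Prod.swap_zero]
  tauto

theorem quadraticSource_swap (Dh : Derivation ℚ (TS R) (TS R)) (a : R)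
    (hε : ∀ m m' : ℕ × ℕ, ε (m + m') = ε m * ε m')
    (hsym : ∀ j : ℤ, j < g → SectorSymmetricAt ε F j) (n : ℕ × ℕ) :
    quadraticSource Dh a F n g
      = (ε n * ((g + 1 : ℤ).negOnePow : ℤ)) • quadraticSource Dh a F n.swap g := by
  unfold quadraticSource
  rw [Finset.smul_sum]
  refine Finset.sum_equiv (Equiv.prodComm ℕ ℕ) (fun m => mem_sectorPairs_swap.symm)
    fun m hm => ?_
  simp only [Finset.mem_filter, Finset.mem_product, Finset.mem_range] at hm
  obtain ⟨⟨hm1, hm2⟩, hm0, hmn⟩ := hm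
  have hsplit : m + (n - m) = n := Prod.ext (by simp; omega) (by simp; omega)
  have hnm : n - m ≠ 0 := by
    contrapose! hmn
    simp only [Prod.ext_iff, Prod.fst_sub, Prod.snd_sub, Prod.fst_zero, Prod.snd_zero] at hmn ⊢
    omega
  rw [Finset.smul_sum]
  refine Finset.sum_congr rfl fun h hh => ?_
  have hh : h < g := Finset.mem_range.1 hh
  rw [show (g : ℤ) - 2 - h = (g - 1 - h) - 1 by ring, sectorBlock_swap Dh a hsym hm0 (by omega),
    sectorBlock_swap Dh a hsym hnm (by omega), smul_mul_smul_comm]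
  congr 1
  rw [mul_mul_mul_comm, ← hε, hsplit, ← Units.val_mul, ← Int.negOnePow_add]
  congr 2
  exact (Int.negOnePow_eq_iff _ _).2 ⟨-1, by ring⟩

end SwapSymmetry

theorem two_parameter_sector_symmetry_general
    {R : Type*} [CommRing R] [Algebra ℚ R]
    (δ : Derivation ℚ R R) (c ft al A : R)
    (p : ℕ → Polynomial R)
    (Dp Dh : Derivation ℚ (TS R) (TS R))
    (hDpC : ∀ r : R, Dp (cc r) = 0)
    (hDpS : Dp (Sv (R := R)) = 1)
    (hDpT : Dp (Tv (R := R)) = (2 : ℚ)⁻¹ • (cc (δ A) ^ 2 * Tv))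
    (F : ℕ × ℕ → ℤ → TS R)
    (hFneg : ∀ (n : ℕ × ℕ) (j : ℤ), j < 0 → F n j = 0)
    (heq : ∀ n : ℕ × ℕ, n ≠ 0 → ∀ g : ℕ,
      Dp (F n (g : ℤ)) - (2 : ℚ)⁻¹ • (((nbar n : TS R)) ^ 2 * cc (δ A) ^ 2 * F n (g : ℤ))
        = -(∑ h ∈ Finset.Icc 1 g, Dop2 δ c ft al A p Dh (nbar n) h (F n ((g : ℤ) - (h : ℤ))))
          + (2 : ℚ)⁻¹ •
            ∑ m ∈ (Finset.range (n.1 + 1) ×ˢ Finset.range (n.2 + 1)).filter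
                (fun m => m ≠ 0 ∧ m ≠ n),
              ∑ h ∈ Finset.range g,
                (Dh (F m ((h : ℤ) - 1)) - (nbar m : TS R) * cc (δ A) * F m (h : ℤ))
                * (Dh (F (n - m) ((g : ℤ) - 2 - (h : ℤ)))
                    - (nbar (n - m) : TS R) * cc (δ A) * F (n - m) ((g : ℤ) - 1 - (h : ℤ))))
    (ε : ℕ × ℕ → ℤ)
    (hεadd : ∀ m m' : ℕ × ℕ, ε (m + m') = ε m * ε m')
    (hamb : ∀ n : ℕ × ℕ, n ≠ 0 → ∀ g : ℕ,
      (F n (g : ℤ)).map (Polynomial.evalRingHom (0 : R))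
        = (ε n * (-1) ^ (g + 1)) • (F (n.2, n.1) (g : ℤ)).map (Polynomial.evalRingHom (0 : R))) :
    ∀ n : ℕ × ℕ, n ≠ 0 → ∀ g : ℕ,
      F n (g : ℤ) = (ε n * (-1) ^ (g + 1)) • F (n.2, n.1) (g : ℤ) := by
  have hsign (g : ℕ) : (-1) ^ (g + 1) = (((g : ℤ) + 1).negOnePow : ℤ) := by
    rw [← Int.coe_negOnePow_natCast, Nat.cast_succ]
  have hT : Dp Tv = cc ((2 : ℚ)⁻¹ • δ A ^ 2) * Tv := by
    rw [hDpT]; simp only [cc, ← smul_C, map_pow, smul_mul_assoc]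
  suffices h : ∀ g : ℕ, SectorSymmetricAt ε F g from fun n hn g => hsign g ▸ h g n hn
  intro g
  induction g using Nat.strong_induction_on with
  | _ g IH =>
  have hsym := sectorSymmetricAt_of_forall_lt hFneg IH
  intro n hn
  have E1 : _ = -_ + (2 : ℚ)⁻¹ • quadraticSource Dh (δ A) F n g := heq n hn g
  have E2 : _ = -_ + (2 : ℚ)⁻¹ • quadraticSource Dh (δ A) F n.swap g :=
    heq n.swap (by rwa [Ne, Prod.swap_eq_iff_eq_swap, Prod.swap_zero]) g
  rw [sum_Dop2_swap δ c ft al A p Dh hsym hn, quadraticSource_swap Dh (δ A) hεadd hsym] at E1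
  have hsq : (nbar n.swap : TS R) ^ 2 = (nbar n : TS R) ^ 2 := by rw [nbar_swap]; push_cast; ring
  rw [hsq] at E2
  refine sub_eq_zero.1 (eq_zero_of_derivation_apply_eq_cc_mul hDpC hDpS hT
    (k := (2 : ℚ)⁻¹ • ((nbar n : R) ^ 2 * δ A ^ 2)) ?_ ?_)
  · rw [show cc ((2 : ℚ)⁻¹ • ((nbar n : R) ^ 2 * δ A ^ 2))
        = (2 : ℚ)⁻¹ • ((nbar n : TS R) ^ 2 * cc (δ A) ^ 2) by
          simp only [cc, ← smul_C, map_mul, map_pow, map_intCast],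
      map_sub, map_zsmul, smul_mul_assoc, mul_sub, mul_smul_comm]
    linear_combination (norm := module) E1 - (ε n * ((g + 1 : ℤ).negOnePow : ℤ)) • E2
  · rw [Polynomial.map_sub, zsmul_eq_mul, Polynomial.map_mul, Polynomial.map_intCast,
      ← zsmul_eq_mul, hamb n hn g, hsign]
    exact sub_self _

/-- In the two-parameter resonant model, if the holomorphic ambiguities respect the
`ℤ₂`-symmetry, then so do the full sector free energies:
`F^{(n₁,n₂)}_g = ε(n)·(−1)^{g+1}·F^{(n₂,n₁)}_g` for every sector and every `g`, i.e.
the sector series satisfy `F^{(n)}(−g_s) = ε(n)·F^{(n*)}(g_s)`. -/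
theorem two_parameter_sector_symmetry
    {R : Type*} [CommRing R] [IsDomain R] [Algebra ℚ R]
    (δ : Derivation ℚ R R) (c f ft al A : R) (hA : δ A ≠ 0)
    (p : ℕ → Polynomial R) (hp : ∀ h : ℕ, 2 ≤ h → (p h).natDegree ≤ 3 * h - 2)
    (Dp Dh : Derivation ℚ (TS R) (TS R))
    (hDpC : ∀ r : R, Dp (cc r) = 0)
    (hDpS : Dp (Sv (R := R)) = 1)
    (hDpT : Dp (Tv (R := R)) = (2 : ℚ)⁻¹ • (cc (δ A) ^ 2 * Tv))
    (hDhC : ∀ r : R, Dh (cc r) = cc (δ r))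
    (hDhS : Dh (Sv (R := R)) = cc f - cc c * Sv ^ 2)
    (hDhT : Dh (Tv (R := R)) = (cc (δ A) * cc (δ (δ A)) * Sv
        + (2 : ℚ)⁻¹ • (cc (δ A) ^ 2 * (cc f - cc c * Sv ^ 2))) * Tv)
    (F : ℕ × ℕ → ℤ → TS R)
    (hFneg : ∀ (n : ℕ × ℕ) (j : ℤ), j < 0 → F n j = 0)
    (heq : ∀ n : ℕ × ℕ, n ≠ 0 → ∀ g : ℕ,
      Dp (F n (g : ℤ)) - (2 : ℚ)⁻¹ • (((nbar n : TS R)) ^ 2 * cc (δ A) ^ 2 * F n (g : ℤ))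
        = -(∑ h ∈ Finset.Icc 1 g, Dop2 δ c ft al A p Dh (nbar n) h (F n ((g : ℤ) - (h : ℤ))))
          + (2 : ℚ)⁻¹ •
            ∑ m ∈ (Finset.range (n.1 + 1) ×ˢ Finset.range (n.2 + 1)).filter
                (fun m => m ≠ 0 ∧ m ≠ n),
              ∑ h ∈ Finset.range g,
                (Dh (F m ((h : ℤ) - 1)) - (nbar m : TS R) * cc (δ A) * F m (h : ℤ))
                * (Dh (F (n - m) ((g : ℤ) - 2 - (h : ℤ)))
                    - (nbar (n - m) : TS R) * cc (δ A) * F (n - m) ((g : ℤ) - 1 - (h : ℤ))))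
    (ε : ℕ × ℕ → ℤ)
    (hεpm : ∀ m : ℕ × ℕ, ε m = 1 ∨ ε m = -1)
    (hεadd : ∀ m m' : ℕ × ℕ, ε (m + m') = ε m * ε m')
    (hamb : ∀ n : ℕ × ℕ, n ≠ 0 → ∀ g : ℕ,
      (F n (g : ℤ)).map (Polynomial.evalRingHom (0 : R))
        = (ε n * (-1) ^ (g + 1)) • (F (n.2, n.1) (g : ℤ)).map (Polynomial.evalRingHom (0 : R))) :
    ∀ n : ℕ × ℕ, n ≠ 0 → ∀ g : ℕ,
      F n (g : ℤ) = (ε n * (-1) ^ (g + 1)) • F (n.2, n.1) (g : ℤ) :=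
  two_parameter_sector_symmetry_general δ c ft al A p Dp Dh hDpC hDpS hDpT F hFneg heq ε hεadd hamb
end
end

section
/- Fix κ ≥ 1 and a nonzero n ∈ ℕ^κ. The set of A-matrices of all non-trivial vector partitions of n equals the Minkowski-sum union over all decompositions of n: { A(r) : r ∈ P(n), r not the trivial partition of n } = ⋃_{m + m' = n, m ≠ 0, m' ≠ 0} { X + Y : X ∈ { A(r₁) : r₁ ∈ P(m) }, Y ∈ { A(r₂) : r₂ ∈ P(m') } }, as sets of symmetric κ×κ matrices over ℕ. -/
/-- The `A`-matrix of a vector partition: `A(r)_{αβ} = Σ_m r(m)·m_α·m_β`. -/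
def AMat {κ : ℕ} (r : (Fin κ → ℕ) →₀ ℕ) : Matrix (Fin κ) (Fin κ) ℕ :=
  Matrix.of fun α β => r.sum fun m k => k * (m α * m β)

/-! A partition is non-trivial exactly when it has at least two parts, i.e. when its number
of parts `Finsupp.degree r` exceeds `1` (it cannot be `0`, as `n ≠ 0`); such an `r` is a sum
`r₁ + r₂` of two nonzero partitions, of `m` and `m'` with `m + m' = n`. Conversely the sum of
nonzero partitions has at least two parts. Both `r ↦ Σ r(m)·m` and `AMat` are additive. -/

namespace Finsupp

variable {α : Type*}

lemma one_lt_degree_add {r₁ r₂ : α →₀ ℕ} (h₁ : r₁ ≠ 0) (h₂ : r₂ ≠ 0) :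
    1 < degree (r₁ + r₂) := by
  have h₁' := (degree_eq_zero_iff r₁).not.mpr h₁
  have h₂' := (degree_eq_zero_iff r₂).not.mpr h₂
  rw [map_add]
  omega

lemma exists_add_of_one_lt_degree {r : α →₀ ℕ} (h : 1 < degree r) :
    ∃ r₁ r₂, r₁ ≠ 0 ∧ r₂ ≠ 0 ∧ r = r₁ + r₂ := by
  obtain ⟨a, ha⟩ : r.support.Nonempty :=
    support_nonempty_iff.mpr fun h0 => by simp [h0] at h
  have hle : single a 1 ≤ r :=
    single_le_iff.mpr (Nat.one_le_iff_ne_zero.mpr (mem_support_iff.mp ha))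
  have hsplit : r = single a 1 + (r - single a 1) := (add_tsub_cancel_of_le hle).symm
  refine ⟨single a 1, r - single a 1, single_ne_zero.mpr one_ne_zero, fun h0 => ?_, hsplit⟩
  rw [hsplit, h0, add_zero, degree_single] at h
  exact h.false

lemma sum_nsmul_add {M : Type*} [AddCommMonoid M] (r₁ r₂ : M →₀ ℕ) :
    (r₁ + r₂).sum (fun m k => k • m) =
      r₁.sum (fun m k => k • m) + r₂.sum (fun m k => k • m) :=
  sum_add_index' (fun m => zero_smul ℕ m) (fun m k l => add_smul k l m)

end Finsupp

open Finsupp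

section VPartition

variable {κ : ℕ} {n m m' : Fin κ → ℕ} {r r₁ r₂ : (Fin κ → ℕ) →₀ ℕ}

lemma AMat_add (r₁ r₂ : (Fin κ → ℕ) →₀ ℕ) : AMat (r₁ + r₂) = AMat r₁ + AMat r₂ := by
  ext α β
  simp only [AMat, Matrix.of_apply, Matrix.add_apply]
  exact sum_add_index' (fun m => zero_mul _) (fun m k l => add_mul k l _)

lemma IsVPartition.add_s8 (h₁ : IsVPartition m r₁) (h₂ : IsVPartition m' r₂) :
    IsVPartition (m + m') (r₁ + r₂) :=
  ⟨by simp [h₁.1, h₂.1], by rw [sum_nsmul_add, h₁.2, h₂.2]⟩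

lemma IsVPartition.exists_of_add (h : IsVPartition n (r₁ + r₂)) :
    ∃ m m', m + m' = n ∧ IsVPartition m r₁ ∧ IsVPartition m' r₂ := by
  have h0 : r₁ 0 = 0 ∧ r₂ 0 = 0 := by simpa using h.1
  exact ⟨_, _, (sum_nsmul_add r₁ r₂).symm.trans h.2, ⟨h0.1, rfl⟩, ⟨h0.2, rfl⟩⟩

lemma IsVPartition.eq_zero_iff (h : IsVPartition n r) : n = 0 ↔ r = 0 := by
  refine ⟨fun hn => ?_, fun hr => by simpa [hr] using h.2.symm⟩
  ext m
  by_contra hm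
  have hterm : r m • m = 0 :=
    Finset.sum_eq_zero_iff.mp (h.2.trans hn) m (mem_support_iff.mpr hm)
  obtain rfl : m = 0 := (smul_eq_zero.mp hterm).resolve_left hm
  exact hm h.1

lemma IsVPartition.eq_of_single_one {a : Fin κ → ℕ} (h : IsVPartition n (single a 1)) :
    a = n := by
  simpa using h.2

lemma IsVPartition.one_lt_degree (h : IsVPartition n r) (hn : n ≠ 0)
    (hr : r ≠ single n 1) : 1 < degree r := by
  have h₀ : degree r ≠ 0 := (degree_eq_zero_iff r).not.mpr (h.eq_zero_iff.not.mp hn)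
  have h₁ : degree r ≠ 1 := by
    intro h1
    obtain ⟨a, rfl⟩ : r ∈ Set.range fun a => single a 1 := range_single_one ▸ h1
    exact hr (by rw [h.eq_of_single_one])
  omega

end VPartition

theorem vpartition_AMat_set_recursion_general {κ : ℕ} (n : Fin κ → ℕ) (hn : n ≠ 0) :
    {M : Matrix (Fin κ) (Fin κ) ℕ |
        ∃ r, IsVPartition n r ∧ r ≠ Finsupp.single n 1 ∧ M = AMat r}
      = ⋃ (m : Fin κ → ℕ) (m' : Fin κ → ℕ) (_ : m + m' = n) (_ : m ≠ 0) (_ : m' ≠ 0),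
          {M : Matrix (Fin κ) (Fin κ) ℕ |
            ∃ X ∈ {X | ∃ r₁, IsVPartition m r₁ ∧ X = AMat r₁},
            ∃ Y ∈ {Y | ∃ r₂, IsVPartition m' r₂ ∧ Y = AMat r₂}, M = X + Y} := by
  ext M
  simp only [Set.mem_ofPred_eq, Set.mem_iUnion]
  constructor
  · rintro ⟨r, hr, hne, rfl⟩
    obtain ⟨r₁, r₂, h₁, h₂, rfl⟩ := exists_add_of_one_lt_degree (hr.one_lt_degree hn hne)
    obtain ⟨m, m', hsum, hr₁, hr₂⟩ := hr.exists_of_add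
    exact ⟨m, m', hsum, hr₁.eq_zero_iff.not.mpr h₁, hr₂.eq_zero_iff.not.mpr h₂,
      _, ⟨r₁, hr₁, rfl⟩, _, ⟨r₂, hr₂, rfl⟩, AMat_add r₁ r₂⟩
  · rintro ⟨m, m', rfl, hm, hm', _, ⟨r₁, hr₁, rfl⟩, _, ⟨r₂, hr₂, rfl⟩, rfl⟩
    have hdeg := one_lt_degree_add (hr₁.eq_zero_iff.not.mp hm) (hr₂.eq_zero_iff.not.mp hm')
    refine ⟨r₁ + r₂, hr₁.add_s8 hr₂, fun h => ?_, (AMat_add r₁ r₂).symm⟩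
    rw [h, degree_single] at hdeg
    exact hdeg.false

/-- Set recursion for the exponents of the propagator-exponentials: the set of
`A`-matrices of non-trivial vector partitions of `n` is the union, over all
decompositions `n = m + m'` into nonzero parts, of the Minkowski sums of the sets of
`A`-matrices of vector partitions of `m` and of `m'`. -/
theorem vpartition_AMat_set_recursion {κ : ℕ} (hκ : 1 ≤ κ) (n : Fin κ → ℕ) (hn : n ≠ 0) :
    {M : Matrix (Fin κ) (Fin κ) ℕ |
        ∃ r, IsVPartition n r ∧ r ≠ Finsupp.single n 1 ∧ M = AMat r}
      = ⋃ (m : Fin κ → ℕ) (m' : Fin κ → ℕ) (_ : m + m' = n) (_ : m ≠ 0) (_ : m' ≠ 0),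
          {M : Matrix (Fin κ) (Fin κ) ℕ |
            ∃ X ∈ {X | ∃ r₁, IsVPartition m r₁ ∧ X = AMat r₁},
            ∃ Y ∈ {Y | ∃ r₂, IsVPartition m' r₂ ∧ Y = AMat r₂}, M = X + Y} :=
  vpartition_AMat_set_recursion_general n hn
end

section
/- Fix κ ≥ 1 and a nonzero n ∈ ℕ^κ. If r is a vector partition of n whose A-matrix equals n⊗n, that is Σ_m r(m)·m_α·m_β = n_α·n_β for all 1 ≤ α, β ≤ κ, then r is the trivial partition of n (r(n) = 1 and r(m) = 0 for all m ≠ n). -/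
/-!
Every part `m` of `r` satisfies `m ≤ n`, so
`Σ_m r(m)·m_α·m_β ≤ Σ_m r(m)·m_α·n_β = n_α·n_β`, and the hypothesis on the `A`-matrix forces
equality term by term: a part with `m_α ≠ 0` has `m_β = n_β` for every `β`. Parts are nonzero,
so every part equals `n`, and then `Σ_m r(m)·m = n` forces a single copy of it.
-/

namespace VectorPartition

variable {ι : Type*} {r : (ι → ℕ) →₀ ℕ} {n m : ι → ℕ}

lemma sum_smul_apply (r : (ι → ℕ) →₀ ℕ) (β : ι) :
    r.sum (fun m k => k • m) β = r.sum (fun m k => k * m β) := by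
  simp only [Finsupp.sum, Finset.sum_apply, Pi.smul_apply, smul_eq_mul]

lemma le_of_mem_support (hr : r.sum (fun m k => k • m) = n) (hm : m ∈ r.support) : m ≤ n :=
  calc m ≤ r m • m := le_self_nsmul zero_le (Finsupp.mem_support_iff.mp hm)
    _ ≤ n := hr ▸ Finset.single_le_sum (f := fun m => r m • m) (fun _ _ => zero_le) hm

lemma eq_of_mem_support_of_apply_ne_zero {α : ι} (hr : r.sum (fun m k => k • m) = n)
    (hA : ∀ β, r.sum (fun m k => k * (m α * m β)) = n α * n β)
    (hm : m ∈ r.support) (hα : m α ≠ 0) : m = n := by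
  funext β
  have hle : ∀ m' ∈ r.support, r m' * (m' α * m' β) ≤ r m' * (m' α * n β) :=
    fun m' hm' => by gcongr; exact le_of_mem_support hr hm' β
  have hsum : ∑ m' ∈ r.support, r m' * (m' α * m' β)
      = ∑ m' ∈ r.support, r m' * (m' α * n β) :=
    calc _ = n α * n β := hA β
      _ = r.sum (fun m k => k * m α) * n β := by rw [← sum_smul_apply, hr]
      _ = _ := by rw [Finsupp.sum, Finset.sum_mul]; simp only [mul_assoc]
  have hterm := (Finset.sum_eq_sum_iff_of_le hle).mp hsum m hm
  exact Nat.eq_of_mul_eq_mul_left (Nat.pos_of_ne_zero hα)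
    (Nat.eq_of_mul_eq_mul_left (Nat.pos_of_ne_zero (Finsupp.mem_support_iff.mp hm)) hterm)

lemma eq_single_of_forall_mem_support_eq (hr : r.sum (fun m k => k • m) = n) (hn : n ≠ 0)
    (hparts : ∀ m ∈ r.support, m = n) : r = Finsupp.single n 1 := by
  obtain ⟨c, rfl⟩ := Finsupp.support_subset_singleton'.mp
    fun m hm => Finset.mem_singleton.mpr (hparts m hm)
  obtain ⟨α, hα⟩ := Function.ne_iff.mp hn
  rw [Finsupp.sum_single_index (zero_smul ℕ n)] at hr
  have hc : c * n α = 1 * n α := by rw [one_mul, ← smul_eq_mul, ← Pi.smul_apply, hr]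
  rw [Nat.eq_of_mul_eq_mul_right (Nat.pos_of_ne_zero hα) hc]

end VectorPartition

open VectorPartition in
theorem vpartition_trivial_class_general {κ : ℕ} (n : Fin κ → ℕ) (hn : n ≠ 0)
    (r : (Fin κ → ℕ) →₀ ℕ) (hr : IsVPartition n r)
    (hA : ∀ α β : Fin κ, r.sum (fun m k => k * (m α * m β)) = n α * n β) :
    r = Finsupp.single n 1 := by
  obtain ⟨hr0, hsum⟩ := hr
  refine eq_single_of_forall_mem_support_eq hsum hn fun m hm => ?_
  have hm0 : m ≠ 0 := fun h => Finsupp.mem_support_iff.mp hm (h ▸ hr0)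
  obtain ⟨α, hα⟩ := Function.ne_iff.mp hm0
  exact eq_of_mem_support_of_apply_ne_zero hsum (hA α) hm hα

/-- If a vector partition of `n` has `A`-matrix `n⊗n`, i.e.
`Σ_m r(m)·m_α·m_β = n_α·n_β` for all `α, β`, then it is the trivial partition of `n`. -/
theorem vpartition_trivial_class {κ : ℕ} (hκ : 1 ≤ κ) (n : Fin κ → ℕ) (hn : n ≠ 0)
    (r : (Fin κ → ℕ) →₀ ℕ) (hr : IsVPartition n r)
    (hA : ∀ α β : Fin κ, r.sum (fun m k => k * (m α * m β)) = n α * n β) :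
    r = Finsupp.single n 1 :=
  vpartition_trivial_class_general n hn r hr hA
end
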